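/- arXiv:1911.12933 — 11 statements merged into one kernel-verified Lean document; each statement's English description precedes it below -/
import Mathlib

section
/- Let Y₁,Z₁,…,Y_m,Z_m be pairwise disjoint sets of variables and X any set of variables. Then J(X ⟶⟶ Y₁ | ⋯ | Y_m) ≤ J(X ⟶⟶ Y₁Z₁ | ⋯ | Y_mZ_m), where J(X ⟶⟶ W₁|⋯|W_m) := Σᵢ H(X∪Wᵢ) − (m−1)H(X) − H(X∪W₁∪⋯∪W_m). This holds for every polymatroid H (i.e., is a Shannon inequality). -/
open Finset

/-!
Enlarging each dependent `Yᵢ` to `Yᵢ ∪ Zᵢ` raises the sum `Σᵢ H(X ∪ Wᵢ)` by exactly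
`Σᵢ (H(X ∪ Yᵢ ∪ Zᵢ) − H(X ∪ Yᵢ))`. Adding the `Zᵢ` one at a time to `X ∪ ⋃ Yᵢ` raises the joint
term by at most the same amount, since by submodularity the marginal gain of `Zᵢ` over a superset
of `X ∪ Yᵢ` is at most its gain over `X ∪ Yᵢ`.
-/

/-- The measure `J(X ⟶⟶ W₁|⋯|W_m) := Σᵢ H(X∪Wᵢ) − (m−1)H(X) − H(X∪W₁∪⋯∪W_m)`. -/
noncomputable def Jm {α : Type*} [DecidableEq α] {ι : Type*} [Fintype ι]
    (H : Finset α → ℝ) (X : Finset α) (W : ι → Finset α) : ℝ :=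
  (∑ i, H (X ∪ W i)) - ((Fintype.card ι : ℝ) - 1) * H X - H (X ∪ univ.biUnion W)

section Polymatroid

variable {α : Type*} [DecidableEq α] (H : Finset α → ℝ)
  (hmono : ∀ A B : Finset α, A ⊆ B → H A ≤ H B)
  (hsub : ∀ A B : Finset α, H (A ∪ B) + H (A ∩ B) ≤ H A + H B)
include hmono hsub

theorem union_sub_le_union_sub_of_subset {A B : Finset α} (C : Finset α) (hAB : A ⊆ B) :
    H (B ∪ C) - H B ≤ H (A ∪ C) - H A := by
  have hunion : B ∪ (A ∪ C) = B ∪ C := by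
    rw [← union_assoc, union_eq_left.mpr hAB]
  have hinter : A ⊆ B ∩ (A ∪ C) := subset_inter hAB subset_union_left
  have hsubBAC := hsub B (A ∪ C)
  rw [hunion] at hsubBAC
  linarith [hmono _ _ hinter]

theorem union_biUnion_le_add_sum {ι : Type*} [DecidableEq ι] (B : Finset α)
    (A C : ι → Finset α) (hA : ∀ i, A i ⊆ B) (s : Finset ι) :
    H (B ∪ s.biUnion C) ≤ H B + ∑ i ∈ s, (H (A i ∪ C i) - H (A i)) := by
  induction s using Finset.induction with
  | empty => simp
  | insert k s hk ih =>
    have hgain := union_sub_le_union_sub_of_subset H hmono hsub (C k)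
      ((hA k).trans (subset_union_left (s₂ := s.biUnion C)))
    rw [biUnion_insert, sum_insert hk, union_left_comm, union_comm (C k)]
    linarith

theorem Jm_le_Jm_union {ι : Type*} [Fintype ι] (X : Finset α) (Y Z : ι → Finset α) :
    Jm H X Y ≤ Jm H X (fun i => Y i ∪ Z i) := by
  classical
  have hjoint := union_biUnion_le_add_sum H hmono hsub (X ∪ univ.biUnion Y)
    (fun i => X ∪ Y i) Z
    (fun i => union_subset_union_right (subset_biUnion_of_mem Y (mem_univ i))) univ
  rw [union_assoc, ← biUnion_union, sum_sub_distrib] at hjoint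
  simp only [Jm, ← union_assoc]
  linarith

end Polymatroid

theorem J_mono_dependents_general {α : Type*} [DecidableEq α] {m : ℕ}
    (H : Finset α → ℝ)
    (hmono : ∀ A B : Finset α, A ⊆ B → H A ≤ H B)
    (hsub : ∀ A B : Finset α, H (A ∪ B) + H (A ∩ B) ≤ H A + H B)
    (X : Finset α) (Y Z : Fin m → Finset α) :
    Jm H X Y ≤ Jm H X (fun i => Y i ∪ Z i) :=
  Jm_le_Jm_union H hmono hsub X Y Z

/-- For pairwise disjoint `Y₁,Z₁,…,Y_m,Z_m` and any `X`,
`J(X ⟶⟶ Y₁|⋯|Y_m) ≤ J(X ⟶⟶ Y₁Z₁|⋯|Y_mZ_m)` holds for every polymatroid `H`. -/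
theorem J_mono_dependents {α : Type*} [DecidableEq α] {m : ℕ}
    (H : Finset α → ℝ)
    (h0 : H ∅ = 0)
    (hmono : ∀ A B : Finset α, A ⊆ B → H A ≤ H B)
    (hsub : ∀ A B : Finset α, H (A ∪ B) + H (A ∩ B) ≤ H A + H B)
    (X : Finset α) (Y Z : Fin m → Finset α)
    (hYZ : ∀ i, Disjoint (Y i) (Z i))
    (hpair : ∀ i j, i ≠ j → Disjoint (Y i ∪ Z i) (Y j ∪ Z j))
    (hX : ∀ i, Disjoint X (Y i ∪ Z i)) :
    Jm H X Y ≤ Jm H X (fun i => Y i ∪ Z i) :=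
  J_mono_dependents_general H hmono hsub X Y Z
end

section
/- Let Y₁,Z₁,…,Y_m,Z_m be pairwise disjoint sets of variables and X any set of variables. Then J(X∪Z₁∪⋯∪Z_m ⟶⟶ Y₁ | ⋯ | Y_m) ≤ J(X ⟶⟶ Y₁Z₁ | ⋯ | Y_mZ_m) holds for every polymatroid H. -/
open Finset

/-- Superadditivity over disjoint blocks: `H(X ∪ ⋃_{i∈s} Zᵢ) + (|s|−1)H(X) ≤ Σ_{i∈s} H(X∪Zᵢ)`. -/
lemma auxA {α : Type*} [DecidableEq α] {m : ℕ}
    (H : Finset α → ℝ)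
    (hsub : ∀ A B : Finset α, H (A ∪ B) + H (A ∩ B) ≤ H A + H B)
    (X : Finset α) (Z : Fin m → Finset α)
    (hdisj : ∀ i j, i ≠ j → Disjoint (Z i) (Z j)) :
    ∀ s : Finset (Fin m),
      H (X ∪ s.biUnion Z) + ((s.card : ℝ) - 1) * H X ≤ ∑ i ∈ s, H (X ∪ Z i) := by
  intro s
  induction s using Finset.induction_on with
  | empty => simp
  | @insert a s ha ih =>
    have hint : (X ∪ Z a) ∩ (X ∪ s.biUnion Z) = X := by
      ext x
      simp only [mem_inter, mem_union, mem_biUnion]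
      constructor
      · rintro ⟨hx1 | hx1, hx2 | ⟨j, hj, hxj⟩⟩
        · exact hx1
        · exact hx1
        · exact hx2
        · exact absurd hxj (Finset.disjoint_left.1 (hdisj a j (fun h => ha (h ▸ hj))) hx1)
      · intro hx; exact ⟨Or.inl hx, Or.inl hx⟩
    have h1 := hsub (X ∪ Z a) (X ∪ s.biUnion Z)
    rw [hint] at h1
    have hu : (X ∪ Z a) ∪ (X ∪ s.biUnion Z) = X ∪ (insert a s).biUnion Z := by
      rw [Finset.biUnion_insert]; ext x
      simp only [mem_union]; tauto
    rw [hu] at h1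
    rw [Finset.sum_insert ha, Finset.card_insert_of_notMem ha]
    push_cast
    linarith

/-- For pairwise disjoint `Y₁,Z₁,…,Y_m,Z_m` and any `X`,
`J(X∪Z₁∪⋯∪Z_m ⟶⟶ Y₁|⋯|Y_m) ≤ J(X ⟶⟶ Y₁Z₁|⋯|Y_mZ_m)` holds for every polymatroid `H`. -/
theorem J_mono_key {α : Type*} [DecidableEq α] {m : ℕ}
    (H : Finset α → ℝ)
    (h0 : H ∅ = 0)
    (hmono : ∀ A B : Finset α, A ⊆ B → H A ≤ H B)
    (hsub : ∀ A B : Finset α, H (A ∪ B) + H (A ∩ B) ≤ H A + H B)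
    (X : Finset α) (Y Z : Fin m → Finset α)
    (hYZ : ∀ i, Disjoint (Y i) (Z i))
    (hpair : ∀ i j, i ≠ j → Disjoint (Y i ∪ Z i) (Y j ∪ Z j))
    (hX : ∀ i, Disjoint X (Y i ∪ Z i)) :
    Jm H (X ∪ univ.biUnion Z) Y ≤ Jm H X (fun i => Y i ∪ Z i) := by
  classical
  set T : Finset α := univ.biUnion Z with hT
  -- pointwise disjointness facts
  have hYnZ : ∀ i j, ∀ x ∈ Y i, x ∉ Z j := by
    intro i j x hx hxz
    by_cases h : i = j
    · subst h; exact Finset.disjoint_left.1 (hYZ i) hx hxz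
    · exact Finset.disjoint_left.1 (hpair i j h) (Finset.mem_union_left _ hx)
        (Finset.mem_union_right _ hxz)
  have hYnX : ∀ i, ∀ x ∈ Y i, x ∉ X := by
    intro i x hx hxX
    exact Finset.disjoint_left.1 (hX i) hxX (Finset.mem_union_left _ hx)
  -- per-index submodularity step
  have key : ∀ i, H ((X ∪ T) ∪ Y i) + H (X ∪ Z i) ≤ H (X ∪ (Y i ∪ Z i)) + H (X ∪ T) := by
    intro i
    have h1 := hsub (X ∪ (Y i ∪ Z i)) (X ∪ T)
    have hu : (X ∪ (Y i ∪ Z i)) ∪ (X ∪ T) = (X ∪ T) ∪ Y i := by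
      ext x
      simp only [hT, mem_union, mem_biUnion, mem_univ, true_and]
      constructor
      · rintro ((hx | hx | hx) | hx | ⟨j, hj⟩)
        · exact Or.inl (Or.inl hx)
        · exact Or.inr hx
        · exact Or.inl (Or.inr ⟨i, hx⟩)
        · exact Or.inl (Or.inl hx)
        · exact Or.inl (Or.inr ⟨j, hj⟩)
      · rintro ((hx | ⟨j, hj⟩) | hx)
        · exact Or.inl (Or.inl hx)
        · exact Or.inr (Or.inr ⟨j, hj⟩)
        · exact Or.inl (Or.inr (Or.inl hx))
    have hi : (X ∪ (Y i ∪ Z i)) ∩ (X ∪ T) = X ∪ Z i := by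
      ext x
      simp only [hT, mem_inter, mem_union, mem_biUnion, mem_univ, true_and]
      constructor
      · rintro ⟨hx | hx | hx, h2⟩
        · exact Or.inl hx
        · rcases h2 with h2 | ⟨j, hj⟩
          · exact absurd h2 (hYnX i x hx)
          · exact absurd hj (hYnZ i j x hx)
        · exact Or.inr hx
      · rintro (hx | hx)
        · exact ⟨Or.inl hx, Or.inl hx⟩
        · exact ⟨Or.inr (Or.inr hx), Or.inr ⟨i, hx⟩⟩
    rw [hu, hi] at h1
    linarith
  have hsum : (∑ i, H ((X ∪ T) ∪ Y i)) + ∑ i, H (X ∪ Z i)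
      ≤ (∑ i, H (X ∪ (Y i ∪ Z i))) + (m : ℝ) * H (X ∪ T) := by
    have := Finset.sum_le_sum (fun i (_ : i ∈ (univ : Finset (Fin m))) => key i)
    simp only [Finset.sum_add_distrib, Finset.sum_const, Finset.card_univ,
      Fintype.card_fin, nsmul_eq_mul] at this
    linarith
  have hZdisj : ∀ i j : Fin m, i ≠ j → Disjoint (Z i) (Z j) := by
    intro i j h
    exact (hpair i j h).mono (Finset.subset_union_right) (Finset.subset_union_right)
  have hA := auxA H hsub X Z hZdisj univ
  rw [Finset.card_univ, Fintype.card_fin] at hA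
  -- the two big unions coincide
  have hbig : (X ∪ T) ∪ univ.biUnion Y = X ∪ univ.biUnion (fun i => Y i ∪ Z i) := by
    ext x
    simp only [hT, mem_union, mem_biUnion, mem_univ, true_and]
    constructor
    · rintro ((hx | ⟨j, hj⟩) | ⟨j, hj⟩)
      · exact Or.inl hx
      · exact Or.inr ⟨j, Or.inr hj⟩
      · exact Or.inr ⟨j, Or.inl hj⟩
    · rintro (hx | ⟨j, hj | hj⟩)
      · exact Or.inl (Or.inl hx)
      · exact Or.inr ⟨j, hj⟩
      · exact Or.inl (Or.inr ⟨j, hj⟩)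
  simp only [Jm, Fintype.card_fin]
  rw [← hT] at hA
  rw [hbig]
  linarith
end

section
/- If an MVD φ = X ⟶⟶ A₁|⋯|A_m refines ψ = X ⟶⟶ B₁|⋯|B_k (same key X, and every dependent Aᵢ of φ is contained in some dependent B_j of ψ, with ∪ᵢAᵢ = ∪ⱼBⱼ), then J(φ) ≥ J(ψ) for every polymatroid H. -/
open Finset

lemma superadd {α : Type*} [DecidableEq α] (H : Finset α → ℝ)
    (hmono : ∀ A B : Finset α, A ⊆ B → H A ≤ H B)
    (hsub : ∀ A B : Finset α, H (A ∪ B) + H (A ∩ B) ≤ H A + H B)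
    (X S T : Finset α) :
    H (X ∪ (S ∪ T)) + H X ≤ H (X ∪ S) + H (X ∪ T) := by
  have h1 := hsub (X ∪ S) (X ∪ T)
  have h2 : H X ≤ H ((X ∪ S) ∩ (X ∪ T)) := by
    apply hmono
    intro x hx
    simp [mem_inter, mem_union, hx]
  have h3 : (X ∪ S) ∪ (X ∪ T) = X ∪ (S ∪ T) := by
    ext x; simp [mem_union]; tauto
  rw [h3] at h1
  linarith

lemma sum_bound {α ι : Type*} [DecidableEq α] [DecidableEq ι] (H : Finset α → ℝ)
    (hmono : ∀ A B : Finset α, A ⊆ B → H A ≤ H B)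
    (hsub : ∀ A B : Finset α, H (A ∪ B) + H (A ∩ B) ≤ H A + H B)
    (X : Finset α) (W : ι → Finset α) (s : Finset ι) :
    H (X ∪ s.biUnion W) + ((s.card : ℝ) - 1) * H X ≤ ∑ i ∈ s, H (X ∪ W i) := by
  induction s using Finset.induction_on with
  | empty => simp
  | @insert a s ha ih =>
    rw [Finset.biUnion_insert, Finset.sum_insert ha, Finset.card_insert_of_notMem ha]
    have h := superadd H hmono hsub X (W a) (s.biUnion W)
    push_cast
    linarith

/-- If the MVD `φ = X ⟶⟶ A₁|⋯|A_m` refines `ψ = X ⟶⟶ B₁|⋯|B_k`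
(same key, same union of dependents, every `Aᵢ` contained in some `Bⱼ`), then
`J(φ) ≥ J(ψ)` for every polymatroid `H`. -/
theorem J_refines {α : Type*} [DecidableEq α] {m k : ℕ}
    (H : Finset α → ℝ)
    (h0 : H ∅ = 0)
    (hmono : ∀ A B : Finset α, A ⊆ B → H A ≤ H B)
    (hsub : ∀ A B : Finset α, H (A ∪ B) + H (A ∩ B) ≤ H A + H B)
    (X : Finset α) (A : Fin m → Finset α) (B : Fin k → Finset α)
    (hApair : ∀ i j, i ≠ j → Disjoint (A i) (A j))
    (hAX : ∀ i, Disjoint X (A i))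
    (hBpair : ∀ i j, i ≠ j → Disjoint (B i) (B j))
    (hBX : ∀ j, Disjoint X (B j))
    (hunion : univ.biUnion A = univ.biUnion B)
    (hrefine : ∀ i, ∃ j, A i ⊆ B j) :
    Jm H X B ≤ Jm H X A := by
  classical
  choose f hfsub using hrefine
  -- each B j is exactly the union of the A i's mapped to it
  have hfib : ∀ j : Fin k, B j = (univ.filter (fun i => f i = j)).biUnion A := by
    intro j
    ext x
    simp only [mem_biUnion, mem_filter, mem_univ, true_and]
    constructor
    · intro hx
      have hx' : x ∈ univ.biUnion A := by
        rw [hunion]; exact mem_biUnion.mpr ⟨j, mem_univ _, hx⟩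
      obtain ⟨i, -, hi⟩ := mem_biUnion.mp hx'
      refine ⟨i, ?_, hi⟩
      by_contra hne
      exact Finset.disjoint_left.mp (hBpair _ _ hne) (hfsub i hi) hx
    · rintro ⟨i, rfl, hi⟩
      exact hfsub i hi
  have hsumj : ∀ j : Fin k,
      H (X ∪ B j) + (((univ.filter (fun i => f i = j)).card : ℝ) - 1) * H X
        ≤ ∑ i ∈ univ.filter (fun i => f i = j), H (X ∪ A i) := by
    intro j
    rw [hfib j]
    exact sum_bound H hmono hsub X A _
  have hpart : ∑ j : Fin k, ∑ i ∈ univ.filter (fun i => f i = j), H (X ∪ A i)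
      = ∑ i : Fin m, H (X ∪ A i) :=
    Finset.sum_fiberwise _ _ _
  have hcardnat : (univ : Finset (Fin m)).card
      = ∑ j : Fin k, (univ.filter (fun i => f i = j)).card :=
    Finset.card_eq_sum_card_fiberwise (fun i _ => mem_univ (f i))
  have hcard : ∑ j : Fin k, ((univ.filter (fun i => f i = j)).card : ℝ) = (m : ℝ) := by
    rw [← Nat.cast_sum, ← hcardnat, Finset.card_univ, Fintype.card_fin]
  have hbig : ∑ j : Fin k, H (X ∪ B j) + ((m : ℝ) - (k : ℝ)) * H X
      ≤ ∑ i : Fin m, H (X ∪ A i) := by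
    have h := Finset.sum_le_sum (fun j (_ : j ∈ (univ : Finset (Fin k))) => hsumj j)
    rw [Finset.sum_add_distrib, ← Finset.sum_mul, Finset.sum_sub_distrib, hcard,
      Finset.sum_const, Finset.card_univ, Fintype.card_fin, nsmul_eq_mul, mul_one,
      hpart] at h
    linarith
  unfold Jm
  rw [hunion]
  simp only [Fintype.card_fin]
  linarith
end

section
/- For two MVDs φ = X ⟶⟶ A₁|⋯|A_m and ψ = X ⟶⟶ B₁|⋯|B_k with the same key X and the same union of dependents, their join φ∨ψ := X ⟶⟶ (Aᵢ∩Bⱼ)_{i,j} satisfies J(φ∨ψ) ≤ J(φ) + m·J(ψ), for every polymatroid H. -/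
open Finset

/-- For two MVDs `φ = X ⟶⟶ A₁|⋯|A_m` and `ψ = X ⟶⟶ B₁|⋯|B_k`
with the same key and same union of dependents, the join
`φ∨ψ = X ⟶⟶ (Aᵢ∩Bⱼ)_{i,j}` satisfies `J(φ∨ψ) ≤ J(φ) + m·J(ψ)` for every
polymatroid `H` (empty intersections contribute 0 to `J`). -/
theorem J_join_le {α : Type*} [DecidableEq α] {m k : ℕ}
    (H : Finset α → ℝ)
    (h0 : H ∅ = 0)
    (hmono : ∀ A B : Finset α, A ⊆ B → H A ≤ H B)
    (hsub : ∀ A B : Finset α, H (A ∪ B) + H (A ∩ B) ≤ H A + H B)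
    (X : Finset α) (A : Fin m → Finset α) (B : Fin k → Finset α)
    (hApair : ∀ i j, i ≠ j → Disjoint (A i) (A j))
    (hAX : ∀ i, Disjoint X (A i))
    (hBpair : ∀ i j, i ≠ j → Disjoint (B i) (B j))
    (hBX : ∀ j, Disjoint X (B j))
    (hunion : univ.biUnion A = univ.biUnion B) :
    Jm H X (fun p : Fin m × Fin k => A p.1 ∩ B p.2) ≤ Jm H X A + (m : ℝ) * Jm H X B := by
  classical
  set U := univ.biUnion A with hU
  have key : ∀ i : Fin m, ∀ T : Finset (Fin k),
      H (X ∪ A i ∪ T.biUnion B) + ∑ j ∈ T, H (X ∪ (A i ∩ B j))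
        ≤ H (X ∪ A i) + ∑ j ∈ T, H (X ∪ B j) := by
    intro i T
    induction T using Finset.induction with
    | empty => simp
    | @insert j T hj ih =>
      rw [Finset.sum_insert hj, Finset.sum_insert hj, Finset.biUnion_insert]
      have sub := hsub (X ∪ A i ∪ T.biUnion B) (X ∪ B j)
      have e : (X ∪ A i ∪ T.biUnion B) ∪ (X ∪ B j) = X ∪ A i ∪ (B j ∪ T.biUnion B) := by
        ext a; simp only [Finset.mem_union]; tauto
      rw [e] at sub
      have mono1 : H (X ∪ (A i ∩ B j)) ≤ H ((X ∪ A i ∪ T.biUnion B) ∩ (X ∪ B j)) := by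
        apply hmono
        intro a ha
        simp only [Finset.mem_union, Finset.mem_inter] at *
        tauto
      linarith
  have hAiU : ∀ i, A i ⊆ U := fun i => Finset.subset_biUnion_of_mem A (mem_univ i)
  have keyi : ∀ i : Fin m,
      ∑ j, H (X ∪ (A i ∩ B j)) ≤ H (X ∪ A i) + (∑ j, H (X ∪ B j) - H (X ∪ U)) := by
    intro i
    have h1 := key i Finset.univ
    have e : X ∪ A i ∪ univ.biUnion B = X ∪ U := by
      rw [← hunion]
      ext a
      simp only [Finset.mem_union]
      constructor
      · rintro ((h | h) | h)
        · exact Or.inl h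
        · exact Or.inr (hAiU i h)
        · exact Or.inr h
      · rintro (h | h)
        · exact Or.inl (Or.inl h)
        · exact Or.inr h
    rw [e] at h1
    linarith
  have sumkey : ∑ i : Fin m, ∑ j : Fin k, H (X ∪ (A i ∩ B j))
      ≤ (∑ i, H (X ∪ A i)) + (m : ℝ) * ((∑ j, H (X ∪ B j)) - H (X ∪ U)) := by
    calc ∑ i : Fin m, ∑ j : Fin k, H (X ∪ (A i ∩ B j))
        ≤ ∑ i : Fin m, (H (X ∪ A i) + ((∑ j, H (X ∪ B j)) - H (X ∪ U))) :=
          Finset.sum_le_sum fun i _ => keyi i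
      _ = (∑ i, H (X ∪ A i)) + (m : ℝ) * ((∑ j, H (X ∪ B j)) - H (X ∪ U)) := by
          rw [Finset.sum_add_distrib, Finset.sum_const]
          simp [mul_comm]
  have eP : X ∪ univ.biUnion (fun p : Fin m × Fin k => A p.1 ∩ B p.2) = X ∪ U := by
    ext a
    simp only [Finset.mem_union, Finset.mem_biUnion, Finset.mem_inter, mem_univ, true_and]
    constructor
    · rintro (h | ⟨p, h1, h2⟩)
      · exact Or.inl h
      · exact Or.inr (hAiU p.1 h1)
    · rintro (h | h)
      · exact Or.inl h
      · have : a ∈ univ.biUnion B := by rw [← hunion]; exact h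
        rw [hU] at h
        simp only [Finset.mem_biUnion, mem_univ, true_and] at h this
        obtain ⟨i, hi⟩ := h
        obtain ⟨j, hjm⟩ := this
        exact Or.inr ⟨(i, j), hi, hjm⟩
  simp only [Jm, eP, ← hU, ← hunion, Fintype.card_prod, Fintype.card_fin, Fintype.sum_prod_type]
  push_cast
  nlinarith [sumkey]
end

section
/- If two exact MVDs with the same key hold (J(φ)=0 and J(ψ)=0 for the empirical entropy), then their join also holds exactly: J(φ∨ψ)=0. Consequently, for each key X there is at most one full exact MVD with key X. -/
open Finset

lemma key_lemma {α : Type*} [DecidableEq α] {ι : Type*} [DecidableEq ι]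
    (H : Finset α → ℝ)
    (hmono : ∀ A B : Finset α, A ⊆ B → H A ≤ H B)
    (hsub : ∀ A B : Finset α, H (A ∪ B) + H (A ∩ B) ≤ H A + H B)
    (X : Finset α) (W : ι → Finset α) (s : Finset ι) :
    ((s.card : ℝ) - 1) * H X + H (X ∪ s.biUnion W) ≤ ∑ i ∈ s, H (X ∪ W i) := by
  induction s using Finset.induction_on with
  | empty => simp
  | @insert a s ha ih =>
    rw [Finset.sum_insert ha, Finset.card_insert_of_notMem ha, Finset.biUnion_insert]
    have h1 := hsub (X ∪ W a) (X ∪ s.biUnion W)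
    have h2 : H X ≤ H ((X ∪ W a) ∩ (X ∪ s.biUnion W)) :=
      hmono _ _ (Finset.subset_inter Finset.subset_union_left Finset.subset_union_left)
    have h3 : (X ∪ W a) ∪ (X ∪ s.biUnion W) = X ∪ (W a ∪ s.biUnion W) := by
      ext x; simp [Finset.mem_union]; tauto
    rw [h3] at h1
    push_cast
    linarith

/-- If two exact MVDs `φ = X ⟶⟶ A₁|⋯|A_m`, `ψ = X ⟶⟶ B₁|⋯|B_k`
with the same key hold (`J(φ)=0` and `J(ψ)=0`), then their join holds exactly:
`J(φ∨ψ)=0`. -/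
theorem J_join_exact {α : Type*} [DecidableEq α] {m k : ℕ}
    (H : Finset α → ℝ)
    (h0 : H ∅ = 0)
    (hmono : ∀ A B : Finset α, A ⊆ B → H A ≤ H B)
    (hsub : ∀ A B : Finset α, H (A ∪ B) + H (A ∩ B) ≤ H A + H B)
    (X : Finset α) (A : Fin m → Finset α) (B : Fin k → Finset α)
    (hApair : ∀ i j, i ≠ j → Disjoint (A i) (A j))
    (hAX : ∀ i, Disjoint X (A i))
    (hBpair : ∀ i j, i ≠ j → Disjoint (B i) (B j))
    (hBX : ∀ j, Disjoint X (B j))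
    (hunion : univ.biUnion A = univ.biUnion B)
    (hφ : Jm H X A = 0) (hψ : Jm H X B = 0) :
    Jm H X (fun p : Fin m × Fin k => A p.1 ∩ B p.2) = 0 := by
  -- union of the join equals the common union
  have hUbig : (univ : Finset (Fin m × Fin k)).biUnion (fun p => A p.1 ∩ B p.2)
      = univ.biUnion B := by
    have : (univ : Finset (Fin m × Fin k)).biUnion (fun p => A p.1 ∩ B p.2)
        = univ.biUnion A ∩ univ.biUnion B := by
      ext x
      simp only [Finset.mem_biUnion, Finset.mem_univ, true_and, Finset.mem_inter]
      constructor
      · rintro ⟨p, hp⟩; exact ⟨⟨p.1, hp.1⟩, ⟨p.2, hp.2⟩⟩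
      · rintro ⟨⟨i, hi⟩, ⟨j, hj⟩⟩; exact ⟨(i, j), hi, hj⟩
    rw [this, hunion, Finset.inter_self]
  -- per-pair submodularity
  have h1 : ∀ (i : Fin m) (j : Fin k),
      H (X ∪ (A i ∩ B j)) + H (X ∪ A i ∪ B j) ≤ H (X ∪ A i) + H (X ∪ B j) := by
    intro i j
    have := hsub (X ∪ A i) (X ∪ B j)
    have e1 : (X ∪ A i) ∪ (X ∪ B j) = X ∪ A i ∪ B j := by
      ext x; simp [Finset.mem_union]; tauto
    have e2 : (X ∪ A i) ∩ (X ∪ B j) = X ∪ (A i ∩ B j) := by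
      ext x; simp [Finset.mem_union, Finset.mem_inter]; tauto
    rw [e1, e2] at this
    linarith
  -- per-i lower bound on sum over j of H(X ∪ A i ∪ B j)
  have h2 : ∀ i : Fin m,
      ((k : ℝ) - 1) * H (X ∪ A i) + H (X ∪ univ.biUnion B)
        ≤ ∑ j, H (X ∪ A i ∪ B j) := by
    intro i
    have hAiU : A i ⊆ univ.biUnion B := by
      rw [← hunion]
      intro x hx
      simp only [Finset.mem_biUnion, Finset.mem_univ, true_and]
      exact ⟨i, hx⟩
    have hk := key_lemma H hmono hsub (X ∪ A i) B univ
    have e : (X ∪ A i) ∪ univ.biUnion B = X ∪ univ.biUnion B := by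
      ext x
      simp only [Finset.mem_union]
      constructor
      · rintro (⟨h | h⟩ | h)
        · exact Or.inl h
        · exact Or.inr (hAiU h)
        · exact Or.inr h
      · rintro (h | h)
        · exact Or.inl (Or.inl h)
        · exact Or.inr h
    rw [e] at hk
    simpa [Finset.union_assoc] using hk
  -- per-i upper bound on sum over j of H(X ∪ (A i ∩ B j))
  have h3 : ∀ i : Fin m,
      ∑ j, H (X ∪ (A i ∩ B j))
        ≤ H (X ∪ A i) + (∑ j, H (X ∪ B j)) - H (X ∪ univ.biUnion B) := by
    intro i
    have hs : ∑ j, (H (X ∪ (A i ∩ B j)) + H (X ∪ A i ∪ B j))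
        ≤ ∑ j : Fin k, (H (X ∪ A i) + H (X ∪ B j)) :=
      Finset.sum_le_sum (fun j _ => h1 i j)
    rw [Finset.sum_add_distrib, Finset.sum_add_distrib, Finset.sum_const] at hs
    simp only [Finset.card_univ, Fintype.card_fin, nsmul_eq_mul] at hs
    have := h2 i
    linarith
  -- total upper bound
  have h4 : ∑ i, ∑ j, H (X ∪ (A i ∩ B j))
      ≤ (∑ i, H (X ∪ A i)) + (m : ℝ) * (∑ j, H (X ∪ B j))
        - (m : ℝ) * H (X ∪ univ.biUnion B) := by
    have hs : ∑ i, ∑ j, H (X ∪ (A i ∩ B j))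
        ≤ ∑ i : Fin m,
            (H (X ∪ A i) + (∑ j, H (X ∪ B j)) - H (X ∪ univ.biUnion B)) :=
      Finset.sum_le_sum (fun i _ => h3 i)
    simp only [Finset.sum_sub_distrib, Finset.sum_add_distrib, Finset.sum_const,
      Finset.card_univ, Fintype.card_fin, nsmul_eq_mul] at hs
    linarith
  -- rewrite the hypotheses
  rw [Jm] at hφ hψ
  simp only [Fintype.card_fin] at hφ hψ
  rw [hunion] at hφ
  -- nonnegativity of the join measure
  have hnn := key_lemma H hmono hsub X (fun p : Fin m × Fin k => A p.1 ∩ B p.2) univ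
  rw [hUbig] at hnn
  simp only [Finset.card_univ, Fintype.card_prod, Fintype.card_fin] at hnn
  -- assemble
  rw [Jm]
  simp only [Fintype.card_prod, Fintype.card_fin, hUbig]
  rw [Fintype.sum_prod_type] at hnn ⊢
  push_cast at hnn ⊢
  have hψ' : ∑ j, H (X ∪ B j) = ((k : ℝ) - 1) * H X + H (X ∪ univ.biUnion B) := by
    linarith
  have e : (m : ℝ) * (∑ j, H (X ∪ B j))
      = (m : ℝ) * (((k : ℝ) - 1) * H X + H (X ∪ univ.biUnion B)) := by rw [hψ']
  linarith
end

section
/- For any join tree (T,χ) with nodes u₁,…,u_m enumerated depth-first (u₁ the root), the join-tree measure decomposes as J(T) = Σ_{i=2}^m I(Ω_{1:(i−1)}; Ωᵢ | Δᵢ), where Ωᵢ = χ(uᵢ), Ω_{1:(i−1)} = Ω₁∪⋯∪Ω_{i−1}, and Δᵢ = χ(parent(uᵢ)) ∩ χ(uᵢ). -/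
open Finset

/-- Conditional mutual information `I(B;C|A) := H(A∪B)+H(A∪C)−H(A∪B∪C)−H(A)`. -/
noncomputable def Imeas {α : Type*} [DecidableEq α] (H : Finset α → ℝ)
    (A B C : Finset α) : ℝ :=
  H (A ∪ B) + H (A ∪ C) - H (A ∪ B ∪ C) - H A

lemma Imeas_simp {α : Type*} [DecidableEq α] (H : Finset α → ℝ)
    (χ : ℕ → Finset α) (par : ℕ → ℕ) (i : ℕ) (hp : par i < i) :
    Imeas H (χ (par i) ∩ χ i) ((range i).biUnion χ) (χ i) =
      H ((range i).biUnion χ) + H (χ i) - H ((range (i+1)).biUnion χ)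
        - H (χ (par i) ∩ χ i) := by
  have h1 : (χ (par i) ∩ χ i) ∪ (range i).biUnion χ = (range i).biUnion χ :=
    Finset.union_eq_right.mpr (le_trans Finset.inter_subset_left
      (Finset.subset_biUnion_of_mem χ (Finset.mem_range.mpr hp)))
  have h2 : (χ (par i) ∩ χ i) ∪ χ i = χ i :=
    Finset.union_eq_right.mpr Finset.inter_subset_right
  have h3 : (χ (par i) ∩ χ i) ∪ (range i).biUnion χ ∪ χ i
      = (range (i+1)).biUnion χ := by
    rw [h1, Finset.range_add_one, Finset.biUnion_insert, Finset.union_comm]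
  rw [Imeas, h1, h2, Finset.range_add_one, Finset.biUnion_insert, Finset.union_comm]

/-- For a join tree with nodes `0,…,m−1` enumerated depth-first
(node `0` the root, every non-root node's parent appearing earlier), bags `χ`,
and satisfying the running intersection property, the join-tree measure decomposes as
`J(T) = Σ_{i=1}^{m−1} I(Ω_{0:(i−1)}; Ωᵢ | Δᵢ)`, where `Ωᵢ = χ(i)`,
`Ω_{0:(i−1)} = χ(0)∪⋯∪χ(i−1)` and `Δᵢ = χ(parent(i)) ∩ χ(i)`. -/
theorem joinTree_J_decomposition {α : Type*} [DecidableEq α]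
    (H : Finset α → ℝ) (h0 : H ∅ = 0)
    (m : ℕ) (hm : 1 ≤ m)
    (χ : ℕ → Finset α) (par : ℕ → ℕ)
    (hpar : ∀ i, 1 ≤ i → i < m → par i < i)
    (hRIP : ∀ (a : α) (i : ℕ), 1 ≤ i → i < m → a ∈ χ i →
      (∃ j < i, a ∈ χ j) → a ∈ χ (par i)) :
    (∑ i ∈ range m, H (χ i)) - (∑ i ∈ Ico 1 m, H (χ (par i) ∩ χ i)) -
        H ((range m).biUnion χ) =
      ∑ i ∈ Ico 1 m, Imeas H (χ (par i) ∩ χ i) ((range i).biUnion χ) (χ i) := by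
  clear hRIP h0
  induction m with
  | zero => omega
  | succ n ih =>
    rcases Nat.eq_or_lt_of_le hm with h | h
    · -- n + 1 = 1, so n = 0
      have hn : n = 0 := by omega
      subst hn
      simp
    · have hn : 1 ≤ n := by omega
      have hpar' : ∀ i, 1 ≤ i → i < n → par i < i := fun i h1 h2 =>
        hpar i h1 (by omega)
      have key := ih hn hpar'
      rw [Finset.sum_range_succ, Finset.sum_Ico_succ_top hn,
        Finset.sum_Ico_succ_top hn,
        Imeas_simp H χ par n (hpar n hn (by omega))]
      linarith [key]
end

section
/- For any join tree (T,χ) and any polymatroid H, J(T) ≥ 0. -/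
open Finset

/-!
Add the bags one at a time in an order where every parent precedes its children. By the
running intersection property, the bag `χ k` meets the union `U` of the earlier bags exactly in
its separator `χ (par k) ∩ χ k`, so submodularity gives
`H (U ∪ χ k) ≤ H U + H (χ k) - H (χ (par k) ∩ χ k)`. Summing these steps bounds the entropy of
the union of all bags by `Σ_v H (χ v) - Σ_edges H (separator)`.
-/

section JoinTree

variable {α : Type*} [DecidableEq α] (χ : ℕ → Finset α) (par : ℕ → ℕ)

theorem biUnion_range_inter_eq_parent_inter {k : ℕ} (hpar : par k < k)
    (hRIP : ∀ a ∈ χ k, (∃ j < k, a ∈ χ j) → a ∈ χ (par k)) :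
    (range k).biUnion χ ∩ χ k = χ (par k) ∩ χ k := by
  ext a
  simp only [mem_inter, mem_biUnion, mem_range]
  constructor
  · rintro ⟨⟨j, hj, haj⟩, hak⟩
    exact ⟨hRIP a hak ⟨j, hj, haj⟩, hak⟩
  · rintro ⟨hap, hak⟩
    exact ⟨⟨par k, hpar, hap⟩, hak⟩

theorem le_sum_sub_sum_separators_of_submodular (H : Finset α → ℝ)
    (hsub : ∀ A B : Finset α, H (A ∪ B) + H (A ∩ B) ≤ H A + H B) {k : ℕ} (hk : 1 ≤ k)
    (hsep : ∀ i, 1 ≤ i → i < k → (range i).biUnion χ ∩ χ i = χ (par i) ∩ χ i) :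
    H ((range k).biUnion χ) ≤
      (∑ i ∈ range k, H (χ i)) - ∑ i ∈ Ico 1 k, H (χ (par i) ∩ χ i) := by
  induction k, hk using Nat.le_induction with
  | base => simp
  | succ k hk ih =>
    have step := hsub ((range k).biUnion χ) (χ k)
    rw [hsep k hk k.lt_add_one] at step
    have ih := ih fun i hi hik => hsep i hi (hik.trans k.lt_add_one)
    rw [sum_range_succ, sum_Ico_succ_top hk, range_add_one, biUnion_insert, union_comm]
    linarith

end JoinTree

theorem joinTree_J_nonneg_general {α : Type*} [DecidableEq α]
    (H : Finset α → ℝ)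
    (hsub : ∀ A B : Finset α, H (A ∪ B) + H (A ∩ B) ≤ H A + H B)
    (m : ℕ) (hm : 1 ≤ m)
    (χ : ℕ → Finset α) (par : ℕ → ℕ)
    (hpar : ∀ i, 1 ≤ i → i < m → par i < i)
    (hRIP : ∀ (a : α) (i : ℕ), 1 ≤ i → i < m → a ∈ χ i →
      (∃ j < i, a ∈ χ j) → a ∈ χ (par i)) :
    0 ≤ (∑ i ∈ range m, H (χ i)) - (∑ i ∈ Ico 1 m, H (χ (par i) ∩ χ i)) -
        H ((range m).biUnion χ) := by
  have hsep : ∀ i, 1 ≤ i → i < m → (range i).biUnion χ ∩ χ i = χ (par i) ∩ χ i :=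
    fun i hi him =>
      biUnion_range_inter_eq_parent_inter χ par (hpar i hi him) fun a => hRIP a i hi him
  linarith [le_sum_sub_sum_separators_of_submodular χ par H hsub hm hsep]

/-- For any join tree (nodes `0,…,m−1`, root `0`, parents appearing
earlier, bags `χ` satisfying the running intersection property) and any polymatroid `H`,
`J(T) := Σ_v H(χ(v)) − Σ_{edges} H(χ(u)∩χ(v)) − H(∪_v χ(v)) ≥ 0`. -/
theorem joinTree_J_nonneg {α : Type*} [DecidableEq α]
    (H : Finset α → ℝ)
    (h0 : H ∅ = 0)
    (hmono : ∀ A B : Finset α, A ⊆ B → H A ≤ H B)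
    (hsub : ∀ A B : Finset α, H (A ∪ B) + H (A ∩ B) ≤ H A + H B)
    (m : ℕ) (hm : 1 ≤ m)
    (χ : ℕ → Finset α) (par : ℕ → ℕ)
    (hpar : ∀ i, 1 ≤ i → i < m → par i < i)
    (hRIP : ∀ (a : α) (i : ℕ), 1 ≤ i → i < m → a ∈ χ i →
      (∃ j < i, a ∈ χ j) → a ∈ χ (par i)) :
    0 ≤ (∑ i ∈ range m, H (χ i)) - (∑ i ∈ Ico 1 m, H (χ (par i) ∩ χ i)) -
        H ((range m).biUnion χ) :=
  joinTree_J_nonneg_general H hsub m hm χ par hpar hRIP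
end

section
/- Merging two adjacent nodes of a join tree cannot increase the measure J: if T′ is obtained from a join tree T by contracting an edge (u,v) and replacing bags χ(u), χ(v) by χ(u)∪χ(v), then J(T) = J(T′) + I(χ(u); χ(v) | χ(u)∩χ(v)), hence J(T) ≥ J(T′) for every polymatroid H. -/
open Finset

/-- Contracting the edge `(par v, v)` of a join tree
(replacing the two bags by their union) yields a join tree `T′` with
`J(T) = J(T′) + I(χ(par v); χ(v) | χ(par v)∩χ(v))`, hence `J(T′) ≤ J(T)`
for every polymatroid `H`. Here the contracted tree has nodes `{0,…,m−1}∖{v}`,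
bags `χ'` (the bag of `par v` merged with that of `v`) and parents `par'`
(children of `v` re-attached to `par v`). -/
theorem joinTree_contract {α : Type*} [DecidableEq α]
    (H : Finset α → ℝ)
    (h0 : H ∅ = 0)
    (hmono : ∀ A B : Finset α, A ⊆ B → H A ≤ H B)
    (hsub : ∀ A B : Finset α, H (A ∪ B) + H (A ∩ B) ≤ H A + H B)
    (m : ℕ) (hm : 1 ≤ m)
    (χ : ℕ → Finset α) (par : ℕ → ℕ)
    (hpar : ∀ i, 1 ≤ i → i < m → par i < i)
    (hRIP : ∀ (a : α) (i : ℕ), 1 ≤ i → i < m → a ∈ χ i →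
      (∃ j < i, a ∈ χ j) → a ∈ χ (par i))
    (v : ℕ) (hv1 : 1 ≤ v) (hvm : v < m)
    (χ' : ℕ → Finset α)
    (hχ' : χ' = fun i => if i = par v then χ (par v) ∪ χ v else χ i)
    (par' : ℕ → ℕ)
    (hpar' : par' = fun i => if par i = v then par v else par i) :
    ((∑ i ∈ range m, H (χ i)) - (∑ i ∈ Ico 1 m, H (χ (par i) ∩ χ i)) -
          H ((range m).biUnion χ) =
        ((∑ i ∈ (range m).erase v, H (χ' i)) -
            (∑ i ∈ (Ico 1 m).erase v, H (χ' (par' i) ∩ χ' i)) -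
            H (((range m).erase v).biUnion χ')) +
          Imeas H (χ (par v) ∩ χ v) (χ (par v)) (χ v)) ∧
      (∑ i ∈ (range m).erase v, H (χ' i)) -
          (∑ i ∈ (Ico 1 m).erase v, H (χ' (par' i) ∩ χ' i)) -
          H (((range m).erase v).biUnion χ') ≤
        (∑ i ∈ range m, H (χ i)) - (∑ i ∈ Ico 1 m, H (χ (par i) ∩ χ i)) -
          H ((range m).biUnion χ) := by
  have hpv : par v < v := hpar v hv1 hvm
  have hpm : par v < m := lt_trans hpv hvm
  have hpvne : par v ≠ v := Nat.ne_of_lt hpv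
  have hv_mem : v ∈ range m := mem_range.2 hvm
  have hp_mem : par v ∈ (range m).erase v := Finset.mem_erase.2 ⟨hpvne, mem_range.2 hpm⟩
  have hv_mem2 : v ∈ Ico 1 m := mem_Ico.2 ⟨hv1, hvm⟩
  -- edge terms are unchanged
  have hedge : ∀ i ∈ (Ico 1 m).erase v,
      χ' (par' i) ∩ χ' i = χ (par i) ∩ χ i := by
    intro i hi
    rw [Finset.mem_erase, Finset.mem_Ico] at hi
    obtain ⟨hiv, h1, h2⟩ := hi
    have hpii : par i < i := hpar i h1 h2
    by_cases hpi : par i = v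
    · have hvi : v < i := hpi ▸ hpii
      have hipv : i ≠ par v := by omega
      simp only [hχ', hpar', if_pos hpi, if_pos rfl, if_neg hipv]
      rw [hpi]
      apply Finset.Subset.antisymm
      · intro a ha
        rw [Finset.mem_inter] at ha ⊢
        refine ⟨?_, ha.2⟩
        rcases Finset.mem_union.1 ha.1 with h | h
        · exact hpi ▸ hRIP a i h1 h2 ha.2 ⟨par v, by omega, h⟩
        · exact h
      · intro a ha
        rw [Finset.mem_inter] at ha ⊢
        exact ⟨Finset.mem_union_right _ ha.1, ha.2⟩
    · by_cases hip : i = par v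
      · have hppv : par i < par v := hip ▸ hpii
        have h3 : ¬ (par i = par v) := by omega
        simp only [hχ', hpar', if_neg hpi, if_neg h3, if_pos hip]
        apply Finset.Subset.antisymm
        · intro a ha
          rw [Finset.mem_inter] at ha ⊢
          refine ⟨ha.1, ?_⟩
          rcases Finset.mem_union.1 ha.2 with h | h
          · rw [hip]; exact h
          · have : a ∈ χ (par v) := hRIP a v hv1 hvm h ⟨par i, by omega, ha.1⟩
            rw [hip]; exact this
        · intro a ha
          rw [Finset.mem_inter] at ha ⊢
          refine ⟨ha.1, Finset.mem_union_left _ ?_⟩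
          rw [← hip]; exact ha.2
      · by_cases hqp : par i = par v
        · simp only [hχ', hpar', if_neg hpi, if_pos hqp, if_neg hip]
          rw [hqp]
          apply Finset.Subset.antisymm
          · intro a ha
            rw [Finset.mem_inter] at ha ⊢
            refine ⟨?_, ha.2⟩
            rcases Finset.mem_union.1 ha.1 with h | h
            · exact h
            · rcases Nat.lt_or_ge i v with hlt | hge
              · exact hRIP a v hv1 hvm h ⟨i, hlt, ha.2⟩
              · have hvi : v < i := by omega
                exact hqp ▸ hRIP a i h1 h2 ha.2 ⟨v, hvi, h⟩
          · intro a ha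
            rw [Finset.mem_inter] at ha ⊢
            exact ⟨Finset.mem_union_left _ ha.1, ha.2⟩
        · simp only [hχ', hpar', if_neg hpi, if_neg hqp, if_neg hip]
  -- union unchanged
  have hU : ((range m).erase v).biUnion χ' = (range m).biUnion χ := by
    ext a
    simp only [Finset.mem_biUnion, hχ', Finset.mem_erase, mem_range]
    constructor
    · rintro ⟨i, ⟨hiv, him⟩, ha⟩
      by_cases hip : i = par v
      · rw [if_pos hip] at ha
        rcases Finset.mem_union.1 ha with h | h
        · exact ⟨par v, hpm, h⟩
        · exact ⟨v, hvm, h⟩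
      · rw [if_neg hip] at ha
        exact ⟨i, him, ha⟩
    · rintro ⟨i, him, ha⟩
      by_cases hiv : i = v
      · exact ⟨par v, ⟨hpvne, hpm⟩, by
          rw [if_pos rfl]; exact Finset.mem_union_right _ (hiv ▸ ha)⟩
      · by_cases hip : i = par v
        · exact ⟨par v, ⟨hpvne, hpm⟩, by
            rw [if_pos rfl]; exact Finset.mem_union_left _ (hip ▸ ha)⟩
        · exact ⟨i, ⟨hiv, him⟩, by rw [if_neg hip]; exact ha⟩
  have hUH : H (((range m).erase v).biUnion χ') = H ((range m).biUnion χ) := by rw [hU]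
  -- node sums
  have hs_erase : ∑ i ∈ ((range m).erase v).erase (par v), H (χ' i)
      = ∑ i ∈ ((range m).erase v).erase (par v), H (χ i) := by
    refine Finset.sum_congr rfl fun i hi => ?_
    rw [Finset.mem_erase] at hi
    simp only [hχ', if_neg hi.1]
  have hS1 : ∑ i ∈ range m, H (χ i)
      = (∑ i ∈ (range m).erase v, H (χ' i)) + H (χ v) + H (χ (par v))
        - H (χ (par v) ∪ χ v) := by
    rw [← Finset.add_sum_erase _ (fun i => H (χ i)) hv_mem,
        ← Finset.add_sum_erase _ (fun i => H (χ i)) hp_mem,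
        ← Finset.add_sum_erase _ (fun i => H (χ' i)) hp_mem,
        hs_erase]
    have hχp : χ' (par v) = χ (par v) ∪ χ v := by simp [hχ']
    rw [hχp]
    ring
  -- edge sums
  have hS2 : ∑ i ∈ Ico 1 m, H (χ (par i) ∩ χ i)
      = H (χ (par v) ∩ χ v) + ∑ i ∈ (Ico 1 m).erase v, H (χ' (par' i) ∩ χ' i) := by
    rw [← Finset.add_sum_erase _ (fun i => H (χ (par i) ∩ χ i)) hv_mem2]
    congr 1
    exact (Finset.sum_congr rfl fun i hi => congrArg H (hedge i hi)).symm
  -- Imeas computation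
  have h1 : χ (par v) ∩ χ v ∪ χ (par v) = χ (par v) :=
    Finset.union_eq_right.2 Finset.inter_subset_left
  have h2 : χ (par v) ∩ χ v ∪ χ v = χ v :=
    Finset.union_eq_right.2 Finset.inter_subset_right
  have hI : Imeas H (χ (par v) ∩ χ v) (χ (par v)) (χ v)
      = H (χ (par v)) + H (χ v) - H (χ (par v) ∪ χ v) - H (χ (par v) ∩ χ v) := by
    simp only [Imeas, h1, h2]
  have hI0 : 0 ≤ Imeas H (χ (par v) ∩ χ v) (χ (par v)) (χ v) := by
    rw [hI]; linarith [hsub (χ (par v)) (χ v)]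
  constructor
  · linarith [hS1, hS2, hI, hUH]
  · linarith [hS1, hS2, hI, hUH, hI0]
end

section
/- If R ⊨_ε AJD(S) for an acyclic schema S with join tree T (i.e., J(S) ≤ ε), then every MVD in the support MVD(T) also ε-holds: J(φ) ≤ ε for each φ ∈ MVD(T). Conversely, if each of the m−1 support MVDs ε-holds, then J(S) ≤ (m−1)ε. -/
open Finset
open scoped Classical

/-- The bag-union of the subtree rooted at `v` (nodes whose upward `par`-path hits `v`). -/
noncomputable def subUnion {α : Type*} [DecidableEq α] (m : ℕ) (χ : ℕ → Finset α)
    (par : ℕ → ℕ) (v : ℕ) : Finset α :=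
  ((range m).filter (fun j => ∃ k, par^[k] j = v)).biUnion χ

/-- The bag-union of the complement of the subtree rooted at `v`. -/
noncomputable def outUnion {α : Type*} [DecidableEq α] (m : ℕ) (χ : ℕ → Finset α)
    (par : ℕ → ℕ) (v : ℕ) : Finset α :=
  ((range m).filter (fun j => ¬ ∃ k, par^[k] j = v)).biUnion χ

section Aux
variable {α : Type*} [DecidableEq α] (H : Finset α → ℝ)

lemma Imeas_nonneg
    (hmono : ∀ A B : Finset α, A ⊆ B → H A ≤ H B)
    (hsub : ∀ A B : Finset α, H (A ∪ B) + H (A ∩ B) ≤ H A + H B)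
    (A B C : Finset α) : 0 ≤ Imeas H A B C := by
  have h1 := hsub (A ∪ B) (A ∪ C)
  have h2 : (A ∪ B) ∪ (A ∪ C) = A ∪ B ∪ C := by ext x; simp [mem_union]; tauto
  have h3 : A ⊆ (A ∪ B) ∩ (A ∪ C) := by
    intro x hx; simp [mem_inter, mem_union, hx]
  have h4 := hmono _ _ h3
  unfold Imeas; rw [h2] at h1; linarith

lemma Imeas_split (A B' B C : Finset α) (hB : B' ⊆ B) :
    Imeas H A B C = Imeas H A B' C + Imeas H (A ∪ B') B C := by
  have h1 : (A ∪ B') ∪ B = A ∪ B := by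
    ext x; simp only [mem_union]; have := @hB x; tauto
  unfold Imeas
  rw [h1]
  ring

lemma Imeas_comm (A B C : Finset α) : Imeas H A B C = Imeas H A C B := by
  have h : A ∪ C ∪ B = A ∪ B ∪ C := by ext x; simp [mem_union]; tauto
  unfold Imeas; rw [h]; ring

lemma Imeas_mono2
    (hmono : ∀ A B : Finset α, A ⊆ B → H A ≤ H B)
    (hsub : ∀ A B : Finset α, H (A ∪ B) + H (A ∩ B) ≤ H A + H B)
    (A B' B C : Finset α) (hB : B' ⊆ B) :
    Imeas H A B' C ≤ Imeas H A B C := by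
  rw [Imeas_split H A B' B C hB]
  have := Imeas_nonneg H hmono hsub (A ∪ B') B C
  linarith

lemma Imeas_mono3
    (hmono : ∀ A B : Finset α, A ⊆ B → H A ≤ H B)
    (hsub : ∀ A B : Finset α, H (A ∪ B) + H (A ∩ B) ≤ H A + H B)
    (A B C' C : Finset α) (hC : C' ⊆ C) :
    Imeas H A B C' ≤ Imeas H A B C := by
  rw [Imeas_comm H A B C', Imeas_comm H A B C]
  exact Imeas_mono2 H hmono hsub A C' C B hC

end Aux

section Aux
variable {α : Type*} [DecidableEq α] (H : Finset α → ℝ)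

lemma J_tree_nonneg
    (hmono : ∀ A B : Finset α, A ⊆ B → H A ≤ H B)
    (hsub : ∀ A B : Finset α, H (A ∪ B) + H (A ∩ B) ≤ H A + H B)
    (χ : ℕ → Finset α) (par : ℕ → ℕ) :
    ∀ S : Finset ℕ, ∀ r : ℕ, r ∈ S →
      (∀ j ∈ S, j ≠ r → par j ∈ S ∧ par j < j) →
      (∀ j ∈ S, r ≤ j) →
      0 ≤ (∑ j ∈ S, H (χ j)) - (∑ j ∈ S.erase r, H (χ (par j) ∩ χ j)) -
        H (S.biUnion χ) := by
  intro S
  induction S using Finset.strongInduction with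
  | _ S ih =>
    intro r hr hcl hle
    by_cases hS : S = {r}
    · subst hS
      simp
    · have hne : S.Nonempty := ⟨r, hr⟩
      set j := S.max' hne with hjdef
      have hj : j ∈ S := S.max'_mem hne
      have hjr : j ≠ r := by
        intro h
        apply hS
        apply Finset.eq_singleton_iff_unique_mem.mpr
        exact ⟨hr, fun x hx => le_antisymm (h ▸ S.le_max' x hx) (hle x hx)⟩
      obtain ⟨hpj, hpjlt⟩ := hcl j hj hjr
      set S' := S.erase j with hS'def
      have hr' : r ∈ S' := mem_erase.mpr ⟨Ne.symm hjr, hr⟩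
      have hpj' : par j ∈ S' := mem_erase.mpr ⟨Nat.ne_of_lt hpjlt, hpj⟩
      have hcl' : ∀ x ∈ S', x ≠ r → par x ∈ S' ∧ par x < x := by
        intro x hx hxr
        obtain ⟨h1, h2⟩ := hcl x (mem_of_mem_erase hx) hxr
        refine ⟨mem_erase.mpr ⟨?_, h1⟩, h2⟩
        exact Nat.ne_of_lt (lt_of_lt_of_le h2 (S.le_max' x (mem_of_mem_erase hx)))
      have hle' : ∀ x ∈ S', r ≤ x := fun x hx => hle x (mem_of_mem_erase hx)
      have IH := ih S' (Finset.erase_ssubset hj) r hr' hcl' hle'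
      have hS_ins : S = insert j S' := (Finset.insert_erase hj).symm
      have e1 : ∑ x ∈ S, H (χ x) = H (χ j) + ∑ x ∈ S', H (χ x) := by
        rw [hS_ins, Finset.sum_insert (Finset.notMem_erase _ _)]
      have hjr2 : j ∈ S.erase r := mem_erase.mpr ⟨hjr, hj⟩
      have e2 : ∑ x ∈ S.erase r, H (χ (par x) ∩ χ x)
          = H (χ (par j) ∩ χ j) + ∑ x ∈ S'.erase r, H (χ (par x) ∩ χ x) := by
        rw [← Finset.insert_erase hjr2, Finset.sum_insert (Finset.notMem_erase _ _),
          Finset.erase_right_comm]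
      have e3 : S.biUnion χ = S'.biUnion χ ∪ χ j := by
        rw [hS_ins, Finset.biUnion_insert, union_comm]
      have key : H (χ (par j) ∩ χ j) + H (S'.biUnion χ ∪ χ j)
          ≤ H (S'.biUnion χ) + H (χ j) := by
        have hsubm := hsub (S'.biUnion χ) (χ j)
        have hA : χ (par j) ∩ χ j ⊆ S'.biUnion χ ∩ χ j :=
          inter_subset_inter (Finset.subset_biUnion_of_mem χ hpj') (subset_refl _)
        have := hmono _ _ hA
        linarith
      rw [e1, e2, e3]
      linarith

lemma parIter_le (m : ℕ) (par : ℕ → ℕ) (hpar0 : par 0 = 0)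
    (hpar : ∀ i, 1 ≤ i → i < m → par i < i) :
    ∀ k j, j < m → par^[k] j ≤ j ∧ par^[k] j < m := by
  intro k
  induction k with
  | zero => simp
  | succ k ihk =>
    intro j hj
    rw [Function.iterate_succ_apply]
    have hpj : par j ≤ j ∧ par j < m := by
      rcases Nat.eq_zero_or_pos j with h | h
      · subst h; rw [hpar0]; omega
      · have := hpar j h hj; omega
    have := ihk (par j) hpj.2
    omega

end Aux


/-- If `R ⊨_ε AJD(S)` for an acyclic schema with join tree `T`
(i.e. `J(T) ≤ ε`) then every support MVD `φ_i ∈ MVD(T)` (for the edge `(par i, i)`,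
with measure `J(φ_i) = I(χ(T_out); χ(T_in) | χ(par i)∩χ(i))`) also `ε`-holds.
Conversely, if each of the `m−1` support MVDs `ε`-holds, then `J(T) ≤ (m−1)ε`. -/
theorem AJD_support_MVDs {α : Type*} [DecidableEq α]
    (H : Finset α → ℝ)
    (h0 : H ∅ = 0)
    (hmono : ∀ A B : Finset α, A ⊆ B → H A ≤ H B)
    (hsub : ∀ A B : Finset α, H (A ∪ B) + H (A ∩ B) ≤ H A + H B)
    (m : ℕ) (hm : 1 ≤ m)
    (χ : ℕ → Finset α) (par : ℕ → ℕ)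
    (hpar0 : par 0 = 0)
    (hpar : ∀ i, 1 ≤ i → i < m → par i < i)
    (hRIP : ∀ (a : α) (i : ℕ), 1 ≤ i → i < m → a ∈ χ i →
      (∃ j < i, a ∈ χ j) → a ∈ χ (par i))
    (ε : ℝ) (hε : 0 ≤ ε) :
    (((∑ i ∈ range m, H (χ i)) - (∑ i ∈ Ico 1 m, H (χ (par i) ∩ χ i)) -
          H ((range m).biUnion χ) ≤ ε) →
        ∀ i ∈ Ico 1 m,
          Imeas H (χ (par i) ∩ χ i) (outUnion m χ par i) (subUnion m χ par i) ≤ ε) ∧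
      ((∀ i ∈ Ico 1 m,
          Imeas H (χ (par i) ∩ χ i) (outUnion m χ par i) (subUnion m χ par i) ≤ ε) →
        (∑ i ∈ range m, H (χ i)) - (∑ i ∈ Ico 1 m, H (χ (par i) ∩ χ i)) -
            H ((range m).biUnion χ) ≤ ((m : ℝ) - 1) * ε) := by
  have hiter := parIter_le m par hpar0 hpar
  -- basic subtree facts, for any root i with 1 ≤ i < m
  have fsub : ∀ i, i < m → χ i ⊆ subUnion m χ par i := by
    intro i him
    apply Finset.subset_biUnion_of_mem (s := (range m).filter (fun j => ∃ k, par^[k] j = i))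
    simp only [mem_filter, mem_range]
    exact ⟨him, 0, rfl⟩
  have fout : ∀ i, 1 ≤ i → i < m → χ (par i) ⊆ outUnion m χ par i := by
    intro i hi1 him
    apply Finset.subset_biUnion_of_mem (s := (range m).filter (fun j => ¬ ∃ k, par^[k] j = i))
    simp only [mem_filter, mem_range]
    have hpi : par i < i := hpar i hi1 him
    refine ⟨by omega, ?_⟩
    rintro ⟨k, hk⟩
    have := hiter k (par i) (by omega)
    omega
  have fge : ∀ i j, j < m → (∃ k, par^[k] j = i) → i ≤ j := by
    rintro i j hj ⟨k, hk⟩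
    have := hiter k j hj
    omega
  have flow : ∀ i j, j < i → j < m → χ j ⊆ outUnion m χ par i := by
    intro i j hji hjm
    apply Finset.subset_biUnion_of_mem (s := (range m).filter (fun j => ¬ ∃ k, par^[k] j = i))
    simp only [mem_filter, mem_range]
    exact ⟨hjm, fun h => by have := fge i j hjm h; omega⟩
  have funion : ∀ i, outUnion m χ par i ∪ subUnion m χ par i = (range m).biUnion χ := by
    intro i
    ext a
    simp only [subUnion, outUnion, mem_union, mem_biUnion, mem_filter, mem_range]
    constructor
    · rintro (⟨j, ⟨hj, _⟩, ha⟩ | ⟨j, ⟨hj, _⟩, ha⟩) <;> exact ⟨j, hj, ha⟩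
    · rintro ⟨j, hj, ha⟩
      by_cases h : ∃ k, par^[k] j = i
      · exact Or.inr ⟨j, ⟨hj, h⟩, ha⟩
      · exact Or.inl ⟨j, ⟨hj, h⟩, ha⟩
  constructor
  · -- direction 1
    intro hJ i hi
    rw [mem_Ico] at hi
    obtain ⟨hi1, him⟩ := hi
    set SC := (range m).filter (fun j => ∃ k, par^[k] j = i) with hSC
    set SB := (range m).filter (fun j => ¬ ∃ k, par^[k] j = i) with hSB
    have hBdef : outUnion m χ par i = SB.biUnion χ := rfl
    have hCdef : subUnion m χ par i = SC.biUnion χ := rfl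
    have h0B : (0 : ℕ) ∈ SB := by
      simp only [hSB, mem_filter, mem_range]
      refine ⟨by omega, ?_⟩
      rintro ⟨k, hk⟩
      have := hiter k 0 (by omega)
      omega
    have hiC : i ∈ SC := by
      simp only [hSC, mem_filter, mem_range]
      exact ⟨him, 0, rfl⟩
    have nB := J_tree_nonneg H hmono hsub χ par SB 0 h0B
      (by
        intro j hj hj0
        simp only [hSB, mem_filter, mem_range] at hj
        have hpj : par j < j := hpar j (by omega) hj.1
        refine ⟨?_, hpj⟩
        simp only [hSB, mem_filter, mem_range]
        refine ⟨by omega, ?_⟩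
        rintro ⟨k, hk⟩
        exact hj.2 ⟨k + 1, by rw [Function.iterate_succ_apply]; exact hk⟩)
      (fun j _ => Nat.zero_le j)
    have nC := J_tree_nonneg H hmono hsub χ par SC i hiC
      (by
        intro j hj hji
        simp only [hSC, mem_filter, mem_range] at hj
        obtain ⟨hjm, k, hk⟩ := hj
        have hij : i ≤ j := fge i j hjm ⟨k, hk⟩
        have hpj : par j < j := hpar j (by omega) hjm
        refine ⟨?_, hpj⟩
        simp only [hSC, mem_filter, mem_range]
        refine ⟨by omega, ?_⟩
        rcases k with _ | k
        · simp at hk; omega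
        · exact ⟨k, by rw [Function.iterate_succ_apply] at hk; exact hk⟩)
      (by
        intro j hj
        simp only [hSC, mem_filter, mem_range] at hj
        exact fge i j hj.1 hj.2)
    -- sum splits
    have s1 : ∑ x ∈ range m, H (χ x) = (∑ x ∈ SC, H (χ x)) + ∑ x ∈ SB, H (χ x) :=
      (Finset.sum_filter_add_sum_filter_not (range m) (fun j => ∃ k, par^[k] j = i) _).symm
    have hIco : Ico 1 m = (range m).erase 0 := by
      ext x; simp only [mem_Ico, mem_erase, mem_range]; omega
    have s2a : ∑ x ∈ range m, H (χ (par x) ∩ χ x)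
        = (∑ x ∈ SC, H (χ (par x) ∩ χ x)) + ∑ x ∈ SB, H (χ (par x) ∩ χ x) :=
      (Finset.sum_filter_add_sum_filter_not (range m) (fun j => ∃ k, par^[k] j = i) _).symm
    have s2b : ∑ x ∈ Ico 1 m, H (χ (par x) ∩ χ x)
        = ∑ x ∈ range m, H (χ (par x) ∩ χ x) - H (χ (par 0) ∩ χ 0) := by
      rw [hIco, Finset.sum_erase_eq_sub (by simp only [mem_range]; omega)]
    have s2c : ∑ x ∈ SB, H (χ (par x) ∩ χ x)
        = H (χ (par 0) ∩ χ 0) + ∑ x ∈ SB.erase 0, H (χ (par x) ∩ χ x) := by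
      rw [← Finset.insert_erase h0B, Finset.sum_insert (Finset.notMem_erase _ _),
        Finset.erase_insert (Finset.notMem_erase _ _)]
    have s2d : ∑ x ∈ SC, H (χ (par x) ∩ χ x)
        = H (χ (par i) ∩ χ i) + ∑ x ∈ SC.erase i, H (χ (par x) ∩ χ x) := by
      rw [← Finset.insert_erase hiC, Finset.sum_insert (Finset.notMem_erase _ _),
        Finset.erase_insert (Finset.notMem_erase _ _)]
    have s3 : Imeas H (χ (par i) ∩ χ i) (outUnion m χ par i) (subUnion m χ par i)
        = H (SB.biUnion χ) + H (SC.biUnion χ) - H ((range m).biUnion χ)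
          - H (χ (par i) ∩ χ i) := by
      unfold Imeas
      have hAB : χ (par i) ∩ χ i ∪ outUnion m χ par i = outUnion m χ par i :=
        Finset.union_eq_right.mpr ((Finset.inter_subset_left).trans (fout i hi1 him))
      have hAC : χ (par i) ∩ χ i ∪ subUnion m χ par i = subUnion m χ par i :=
        Finset.union_eq_right.mpr ((Finset.inter_subset_right).trans (fsub i him))
      rw [hAB, hAC, funion i, hBdef, hCdef]
    rw [s3]
    rw [s2c, s2d] at s2a
    linarith [nB, nC, hJ]
  · -- direction 2
    intro hMVD
    have key : ∀ n, 1 ≤ n → n ≤ m →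
        (∑ x ∈ range n, H (χ x)) - (∑ x ∈ Ico 1 n, H (χ (par x) ∩ χ x)) -
            H ((range n).biUnion χ)
          ≤ ∑ x ∈ Ico 1 n,
              Imeas H (χ (par x) ∩ χ x) (outUnion m χ par x) (subUnion m χ par x) := by
      intro n
      induction n with
      | zero => omega
      | succ n ihn =>
        intro _ hnm
        rcases Nat.eq_zero_or_pos n with h | hn1
        · subst h
          simp
        · have ihn' := ihn hn1 (by omega)
          have hnm' : n < m := by omega
          rw [Finset.sum_range_succ, Finset.sum_Ico_succ_top hn1,
            Finset.sum_Ico_succ_top hn1]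
          have hbU : (range (n + 1)).biUnion χ = (range n).biUnion χ ∪ χ n := by
            rw [Finset.range_add_one, Finset.biUnion_insert, union_comm]
          rw [hbU]
          set U := (range n).biUnion χ with hU
          have hAU : χ (par n) ∩ χ n ⊆ U := by
            have hpn : par n < n := hpar n hn1 hnm'
            exact (Finset.inter_subset_left).trans
              (Finset.subset_biUnion_of_mem χ (by simp only [mem_range]; omega))
          have eq1 : H U + H (χ n) - H (χ (par n) ∩ χ n) - H (U ∪ χ n)
              = Imeas H (χ (par n) ∩ χ n) U (χ n) := by
            unfold Imeas
            rw [Finset.union_eq_right.mpr hAU,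
              Finset.union_eq_right.mpr (Finset.inter_subset_right : χ (par n) ∩ χ n ⊆ χ n)]
            ring
          have hUB : U ⊆ outUnion m χ par n := by
            rw [hU]
            apply Finset.biUnion_subset.mpr
            intro j hj
            rw [mem_range] at hj
            exact flow n j hj (by omega)
          have step1 : Imeas H (χ (par n) ∩ χ n) U (χ n)
              ≤ Imeas H (χ (par n) ∩ χ n) (outUnion m χ par n) (χ n) :=
            Imeas_mono2 H hmono hsub _ _ _ _ hUB
          have step2 : Imeas H (χ (par n) ∩ χ n) (outUnion m χ par n) (χ n)
              ≤ Imeas H (χ (par n) ∩ χ n) (outUnion m χ par n) (subUnion m χ par n) :=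
            Imeas_mono3 H hmono hsub _ _ _ _ (fsub n hnm')
          linarith
    have hmain := key m hm le_rfl
    have hbound : ∑ x ∈ Ico 1 m,
        Imeas H (χ (par x) ∩ χ x) (outUnion m χ par x) (subUnion m χ par x)
          ≤ ((m : ℝ) - 1) * ε := by
      calc _ ≤ ∑ _x ∈ Ico 1 m, ε := Finset.sum_le_sum hMVD
        _ = ((m : ℝ) - 1) * ε := by
            rw [Finset.sum_const, Nat.card_Ico, nsmul_eq_mul]
            congr 1
            push_cast [Nat.cast_sub hm]
            ring
    linarith
end

section
/- Completeness of minimal-separator full MVDs: if X ⟶⟶ Y|Z is an ε-MVD for R (i.e., I(Y;Z|X) ≤ ε), then there exist MVDs φ₁,…,φ_m in the set M_ε of full ε-MVDs whose keys are minimal separators, with m = |Y|·|Z|, such that I(Y;Z|X) ≤ Σᵢ J(φᵢ) is a Shannon inequality. -/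
open Finset
open scoped Classical

variable {α : Type*}

/-- A multivalued dependency over the attribute set `α`: a key and a set of dependents. -/
structure MVD (α : Type*) where
  key : Finset α
  deps : Finset (Finset α)

namespace MVD

variable [Fintype α] [DecidableEq α]

/-- A well-formed MVD: at least two dependents, each dependent nonempty, disjoint from
the key and pairwise disjoint, and together with the key covering all attributes. -/
def valid (φ : MVD α) : Prop :=
  2 ≤ φ.deps.card ∧
  (∀ D ∈ φ.deps, D.Nonempty ∧ Disjoint D φ.key) ∧
  (∀ D ∈ φ.deps, ∀ E ∈ φ.deps, D ≠ E → Disjoint D E) ∧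
  φ.key ∪ φ.deps.sup id = Finset.univ

/-- `J(S ⟶⟶ W₁|⋯|W_p) := Σᵢ H(S∪Wᵢ) − (p−1)H(S) − H(Ω)`. -/
noncomputable def J (H : Finset α → ℝ) (φ : MVD α) : ℝ :=
  (∑ D ∈ φ.deps, H (φ.key ∪ D)) - ((φ.deps.card : ℝ) - 1) * H φ.key - H Finset.univ

/-- `φ` is an `ε`-MVD: well-formed with `J(φ) ≤ ε`. -/
def isEps (H : Finset α → ℝ) (ε : ℝ) (φ : MVD α) : Prop :=
  φ.valid ∧ φ.J H ≤ ε

/-- `φ` refines `ψ`: same key and every dependent of `φ` is contained in a dependent of `ψ`. -/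
def refines (φ ψ : MVD α) : Prop :=
  φ.key = ψ.key ∧ ∀ D ∈ φ.deps, ∃ E ∈ ψ.deps, D ⊆ E

/-- Strict refinement. -/
def strictRefines (φ ψ : MVD α) : Prop :=
  refines φ ψ ∧ φ.deps ≠ ψ.deps

/-- `φ` is a full `ε`-MVD: it `ε`-holds and no strict refinement of it `ε`-holds. -/
def full (H : Finset α → ℝ) (ε : ℝ) (φ : MVD α) : Prop :=
  isEps H ε φ ∧ ∀ ψ : MVD α, ψ.valid → strictRefines ψ φ → ¬ ψ.J H ≤ ε

/-- `φ` puts the attributes `A` and `B` into two distinct dependents. -/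
def separatesPair (φ : MVD α) (A B : α) : Prop :=
  ∃ D ∈ φ.deps, ∃ E ∈ φ.deps, D ≠ E ∧ A ∈ D ∧ B ∈ E

end MVD

variable [Fintype α] [DecidableEq α]

/-- The set `S` separates attributes `A,B`: some `ε`-MVD with key `S` separates them. -/
def sepSet (H : Finset α → ℝ) (ε : ℝ) (S : Finset α) (A B : α) : Prop :=
  ∃ φ : MVD α, φ.key = S ∧ φ.isEps H ε ∧ φ.separatesPair A B

/-- `S` is a minimal `A,B`-separator. -/
def minSep (H : Finset α → ℝ) (ε : ℝ) (S : Finset α) (A B : α) : Prop :=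
  sepSet H ε S A B ∧ ∀ S' ⊂ S, ¬ sepSet H ε S' A B

/-- `M_ε`: the full `ε`-MVDs whose key is a minimal `A,B`-separator, for some pair `A,B`
which the MVD separates. -/
def Meps (H : Finset α → ℝ) (ε : ℝ) : Set (MVD α) :=
  {φ | φ.full H ε ∧ ∃ A B : α, minSep H ε φ.key A B ∧ φ.separatesPair A B}

/-!
By the chain rule, `I(Y;Z|X)` is the sum over `A ∈ Y`, `B ∈ Z` of `I(A;B|W)` with
`W = X ∪ A_< ∪ B_<`, and each `W` separates `A` from `B` (the MVD `W ⟶⟶ Y∖A_< | Z∖B_<` is still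
an `ε`-MVD since conditional mutual information is nonnegative). Shrinking `W` to a minimal
separator `S` and refining the separating MVD to a full one `φ`, the term `I(A;B|W)` is bounded by
`J(φ)`: enlarge `A, B` to the dependent `D ∋ A` and to the rest `V` of the attributes, move the
attributes of `W ∖ S ⊆ D ∪ V` out of the key, and merge all dependents of `φ` other than `D`.
-/

section Polymatroid

variable {β : Type*} [DecidableEq β]

def Submodular (H : Finset β → ℝ) : Prop :=
  ∀ A B : Finset β, H (A ∪ B) + H (A ∩ B) ≤ H A + H B

/-- `I(Y;Z|X)`. -/
def condMutualInfo (H : Finset β → ℝ) (X Y Z : Finset β) : ℝ :=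
  H (X ∪ Y) + H (X ∪ Z) - H X - H (X ∪ Y ∪ Z)

variable {H : Finset β → ℝ}

theorem condMutualInfo_comm (H : Finset β → ℝ) (X Y Z : Finset β) :
    condMutualInfo H X Y Z = condMutualInfo H X Z Y := by
  rw [condMutualInfo, condMutualInfo, union_right_comm]
  ring

theorem condMutualInfo_union_left (H : Finset β → ℝ) (X Y₁ Y₂ Z : Finset β) :
    condMutualInfo H X (Y₁ ∪ Y₂) Z =
      condMutualInfo H X Y₁ Z + condMutualInfo H (X ∪ Y₁) Y₂ Z := by
  simp only [condMutualInfo, union_assoc]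
  ring

theorem condMutualInfo_insert_left (H : Finset β → ℝ) (X Y Z : Finset β) (A : β) :
    condMutualInfo H X (insert A Y) Z =
      condMutualInfo H X {A} Z + condMutualInfo H (insert A X) Y Z := by
  rw [insert_eq, condMutualInfo_union_left, union_singleton]

theorem condMutualInfo_empty_left (H : Finset β → ℝ) (X Z : Finset β) :
    condMutualInfo H X ∅ Z = 0 := by
  simp [condMutualInfo]

theorem condMutualInfo_nonneg (hH : Submodular H) (X : Finset β) {Y Z : Finset β}
    (hYZ : Disjoint Y Z) : 0 ≤ condMutualInfo H X Y Z := by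
  have h := hH (X ∪ Y) (X ∪ Z)
  rw [← union_union_distrib_left, ← union_inter_distrib_left,
    disjoint_iff_inter_eq_empty.mp hYZ, union_empty, ← union_assoc] at h
  rw [condMutualInfo]
  linarith

theorem condMutualInfo_mono_left (hH : Submodular H) (W : Finset β) {P P' Q : Finset β}
    (hPP' : P ⊆ P') (hP'Q : Disjoint P' Q) :
    condMutualInfo H W P Q ≤ condMutualInfo H W P' Q :=
  calc condMutualInfo H W P Q
      ≤ condMutualInfo H W P Q + condMutualInfo H (W ∪ P) (P' \ P) Q :=
        le_add_of_nonneg_right (condMutualInfo_nonneg hH _ (hP'Q.mono_left sdiff_subset))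
    _ = condMutualInfo H W P' Q := by
        rw [← condMutualInfo_union_left, union_sdiff_of_subset hPP']

theorem condMutualInfo_mono_right (hH : Submodular H) (W : Finset β) {P Q Q' : Finset β}
    (hQQ' : Q ⊆ Q') (hPQ' : Disjoint P Q') :
    condMutualInfo H W P Q ≤ condMutualInfo H W P Q' := by
  rw [condMutualInfo_comm, condMutualInfo_comm H W P]
  exact condMutualInfo_mono_left hH W hQQ' hPQ'.symm

theorem condMutualInfo_union_key_le (hH : Submodular H) (S : Finset β) {U₁ U V : Finset β}
    (hU₁ : U₁ ⊆ U) (hUV : Disjoint U V) :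
    condMutualInfo H (S ∪ U₁) U V ≤ condMutualInfo H S U V := by
  have h := condMutualInfo_union_left H S U₁ U V
  rw [union_eq_right.mpr hU₁] at h
  linarith [condMutualInfo_nonneg hH S (hUV.mono_left hU₁)]

/-- Conditioning can increase mutual information in general, but not conditioning on attributes
of `U ∪ V` themselves. -/
theorem condMutualInfo_anti_key (hH : Submodular H) {S W U V : Finset β} (hSW : S ⊆ W)
    (hW : W ⊆ S ∪ U ∪ V) (hUV : Disjoint U V) :
    condMutualInfo H W U V ≤ condMutualInfo H S U V := by
  have hsplit : W = S ∪ (W ∩ U) ∪ (W ∩ V) := by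
    ext x
    have h₁ := @hSW x
    have h₂ := @hW x
    simp only [mem_union, mem_inter] at h₂ ⊢
    tauto
  calc condMutualInfo H W U V
      = condMutualInfo H (S ∪ (W ∩ U) ∪ (W ∩ V)) U V := by rw [← hsplit]
    _ ≤ condMutualInfo H (S ∪ (W ∩ U)) U V := by
        rw [condMutualInfo_comm, condMutualInfo_comm H _ U]
        exact condMutualInfo_union_key_le hH _ inter_subset_right hUV.symm
    _ ≤ condMutualInfo H S U V := condMutualInfo_union_key_le hH S inter_subset_right hUV

theorem add_card_mul_le_sum_union (hH : Submodular H) (S : Finset β) {𝒜 : Finset (Finset β)}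
    (h𝒜 : (𝒜 : Set (Finset β)).PairwiseDisjoint id) :
    H (S ∪ 𝒜.sup id) + #𝒜 * H S ≤ ∑ D ∈ 𝒜, H (S ∪ D) + H S := by
  induction 𝒜 using Finset.induction_on with
  | empty => simp
  | @insert D 𝒜 hD ih =>
    rw [coe_insert, Set.pairwiseDisjoint_insert_of_notMem (by simpa using hD)] at h𝒜
    have hnn := condMutualInfo_nonneg hH S
      (Finset.disjoint_sup_right.mpr fun E hE => h𝒜.2 E hE)
    rw [sup_insert, id, sup_eq_union, ← union_assoc, sum_insert hD, card_insert_of_notMem hD]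
    rw [condMutualInfo, id] at hnn
    push_cast
    linarith [ih h𝒜.1]

end Polymatroid

namespace MVD

variable {φ ψ χ : MVD α}

theorem eq_of_mem_deps_of_mem (hφ : φ.valid) {D E : Finset α} {x : α} (hD : D ∈ φ.deps)
    (hE : E ∈ φ.deps) (hxD : x ∈ D) (hxE : x ∈ E) : D = E := by
  by_contra hne
  exact disjoint_left.mp (hφ.2.2.1 D hD E hE hne) hxD hxE

theorem exists_mem_deps_of_notMem_key (hφ : φ.valid) {x : α} (hx : x ∉ φ.key) :
    ∃ D ∈ φ.deps, x ∈ D := by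
  have hx' : x ∈ φ.key ∪ φ.deps.sup id := hφ.2.2.2 ▸ mem_univ x
  simpa [hx] using hx'

theorem notMem_key_of_mem_deps (hφ : φ.valid) {D : Finset α} {x : α} (hD : D ∈ φ.deps)
    (hx : x ∈ D) : x ∉ φ.key :=
  disjoint_left.mp (hφ.2.1 D hD).2 hx

omit [Fintype α] [DecidableEq α] in
theorem refines_refl (φ : MVD α) : φ.refines φ :=
  ⟨rfl, fun D hD => ⟨D, hD, subset_rfl⟩⟩

omit [Fintype α] [DecidableEq α] in
theorem refines.trans (h₁ : φ.refines ψ) (h₂ : ψ.refines χ) : φ.refines χ := by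
  refine ⟨h₁.1.trans h₂.1, fun D hD => ?_⟩
  obtain ⟨E, hE, hDE⟩ := h₁.2 D hD
  obtain ⟨F, hF, hEF⟩ := h₂.2 E hE
  exact ⟨F, hF, hDE.trans hEF⟩

theorem deps_subset_of_refines_of_refines (hφ : φ.valid) (h₁ : φ.refines ψ)
    (h₂ : ψ.refines φ) : φ.deps ⊆ ψ.deps := by
  intro D hD
  obtain ⟨E, hE, hDE⟩ := h₁.2 D hD
  obtain ⟨D', hD', hED'⟩ := h₂.2 E hE
  obtain ⟨x, hx⟩ := (hφ.2.1 D hD).1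
  obtain rfl : D = D' := eq_of_mem_deps_of_mem hφ hD hD' hx (hED' (hDE hx))
  rwa [hDE.antisymm hED']

theorem strictRefines.trans (hφ : φ.valid) (hψ : ψ.valid) (h₁ : φ.strictRefines ψ)
    (h₂ : ψ.strictRefines χ) : φ.strictRefines χ := by
  refine ⟨h₁.1.trans h₂.1, fun hφχ => h₁.2 ?_⟩
  have hψφ : ψ.refines φ := ⟨h₂.1.1.trans (h₁.1.1.trans h₂.1.1).symm, hφχ ▸ h₂.1.2⟩
  exact (deps_subset_of_refines_of_refines hφ h₁.1 hψφ).antisymm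
    (deps_subset_of_refines_of_refines hψ hψφ h₁.1)

/-- Stated on the dependents alone, so that it is a relation on a finite type. -/
def StrictRefinesWithKey (k : Finset α) (d e : Finset (Finset α)) : Prop :=
  (mk k d).valid ∧ (mk k e).valid ∧ (mk k d).strictRefines (mk k e)

theorem wellFounded_strictRefinesWithKey (k : Finset α) :
    WellFounded (StrictRefinesWithKey k) :=
  have : IsTrans _ (StrictRefinesWithKey k) :=
    ⟨fun _ _ _ h₁ h₂ => ⟨h₁.1, h₂.2.1, h₁.2.2.trans h₁.1 h₁.2.1 h₂.2.2⟩⟩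
  have : Std.Irrefl (StrictRefinesWithKey k) := ⟨fun _ h => h.2.2.2 rfl⟩
  Finite.wellFounded_of_trans_of_irrefl _

theorem exists_full_refines {H : Finset α → ℝ} {ε : ℝ} (hχ : χ.isEps H ε) :
    ∃ φ : MVD α, φ.full H ε ∧ φ.refines χ := by
  obtain ⟨d, ⟨hd, hdχ⟩, hmin⟩ := (wellFounded_strictRefinesWithKey χ.key).has_min
    {d | (mk χ.key d).isEps H ε ∧ (mk χ.key d).refines χ} ⟨χ.deps, hχ, refines_refl χ⟩
  refine ⟨mk χ.key d, ⟨hd, fun ⟨k, e⟩ he hed hJ => ?_⟩, hdχ⟩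
  obtain rfl : k = χ.key := hed.1.1
  exact hmin e ⟨⟨he, hJ⟩, hed.1.trans hdχ⟩ ⟨he, hd.1, hed⟩

theorem separatesPair.of_refines (hφ : φ.valid) (hψ : ψ.valid) (hφψ : φ.refines ψ) {A B : α}
    (hAB : ψ.separatesPair A B) : φ.separatesPair A B := by
  obtain ⟨P, hP, Q, hQ, hPQ, hAP, hBQ⟩ := hAB
  have hkey : φ.key = ψ.key := hφψ.1
  obtain ⟨D, hD, hAD⟩ := exists_mem_deps_of_notMem_key hφ
    (hkey ▸ notMem_key_of_mem_deps hψ hP hAP)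
  obtain ⟨E, hE, hBE⟩ := exists_mem_deps_of_notMem_key hφ
    (hkey ▸ notMem_key_of_mem_deps hψ hQ hBQ)
  refine ⟨D, hD, E, hE, ?_, hAD, hBE⟩
  rintro rfl
  obtain ⟨P', hP', hDP'⟩ := hφψ.2 D hD
  exact hPQ ((eq_of_mem_deps_of_mem hψ hP' hP (hDP' hAD) hAP).symm.trans
    (eq_of_mem_deps_of_mem hψ hP' hQ (hDP' hBE) hBQ))

theorem sup_erase_deps (hφ : φ.valid) {D : Finset α} (hD : D ∈ φ.deps) :
    (φ.deps.erase D).sup id = univ \ (φ.key ∪ D) := by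
  ext x
  simp only [mem_sup, mem_erase, id, mem_sdiff, mem_univ, true_and, mem_union, not_or]
  constructor
  · rintro ⟨E, ⟨hED, hE⟩, hxE⟩
    exact ⟨notMem_key_of_mem_deps hφ hE hxE,
      fun hxD => hED (eq_of_mem_deps_of_mem hφ hE hD hxE hxD)⟩
  · rintro ⟨hxk, hxD⟩
    obtain ⟨E, hE, hxE⟩ := exists_mem_deps_of_notMem_key hφ hxk
    exact ⟨E, ⟨fun hED => hxD (hED ▸ hxE), hE⟩, hxE⟩

/-- Merging all dependents other than `D` into one does not increase `J`. -/
theorem condMutualInfo_le_J {H : Finset α → ℝ} (hH : Submodular H) (hφ : φ.valid)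
    {D : Finset α} (hD : D ∈ φ.deps) :
    condMutualInfo H φ.key D (univ \ (φ.key ∪ D)) ≤ φ.J H := by
  have h := add_card_mul_le_sum_union hH φ.key (𝒜 := φ.deps.erase D)
    fun E hE F hF hEF => hφ.2.2.1 E (mem_of_mem_erase hE) F (mem_of_mem_erase hF) hEF
  rw [sup_erase_deps hφ hD, card_erase_of_mem hD,
    Nat.cast_sub (one_le_two.trans hφ.1)] at h
  have hsum := sum_erase_add φ.deps (fun E => H (φ.key ∪ E)) hD
  rw [condMutualInfo, union_sdiff_of_subset (subset_univ _), J]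
  push_cast at h
  linarith

theorem condMutualInfo_le_J_of_separatesPair {H : Finset α → ℝ} (hH : Submodular H)
    (hφ : φ.valid) {W : Finset α} (hW : φ.key ⊆ W) {A B : α} (hAB : φ.separatesPair A B) :
    condMutualInfo H W {A} {B} ≤ φ.J H := by
  obtain ⟨D, hD, E, hE, hDE, hAD, hBE⟩ := hAB
  set V := univ \ (φ.key ∪ D)
  have hDV : Disjoint D V := disjoint_sdiff.mono_left subset_union_right
  have hBV : B ∈ V := by
    simpa [V] using ⟨notMem_key_of_mem_deps hφ hE hBE,
      fun hBD => hDE (eq_of_mem_deps_of_mem hφ hD hE hBD hBE)⟩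
  calc condMutualInfo H W {A} {B}
      ≤ condMutualInfo H W D {B} :=
        condMutualInfo_mono_left hH W (singleton_subset_iff.mpr hAD)
          (disjoint_singleton_right.mpr (disjoint_right.mp hDV hBV))
    _ ≤ condMutualInfo H W D V :=
        condMutualInfo_mono_right hH W (singleton_subset_iff.mpr hBV) hDV
    _ ≤ condMutualInfo H φ.key D V := by
        refine condMutualInfo_anti_key hH hW ?_ hDV
        rw [union_sdiff_of_subset (subset_univ _)]
        exact subset_univ W
    _ ≤ φ.J H := condMutualInfo_le_J hH hφ hD

end MVD

theorem exists_minSep_subset {H : Finset α → ℝ} {ε : ℝ} {W : Finset α} {A B : α}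
    (hW : sepSet H ε W A B) : ∃ S ⊆ W, minSep H ε S A B := by
  obtain ⟨S, ⟨hSW, hS⟩, hmin⟩ :=
    wellFounded_lt.has_min {S | S ⊆ W ∧ sepSet H ε S A B} ⟨W, subset_rfl, hW⟩
  exact ⟨S, hSW, hS, fun S' hS'S hS' => hmin S' ⟨hS'S.subset.trans hSW, hS'⟩ hS'S⟩

theorem exists_mem_Meps_key_subset {H : Finset α → ℝ} {ε : ℝ} {W : Finset α} {A B : α}
    (hW : sepSet H ε W A B) :
    ∃ φ ∈ Meps H ε, φ.key ⊆ W ∧ φ.separatesPair A B := by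
  obtain ⟨S, hSW, hS⟩ := exists_minSep_subset hW
  obtain ⟨ψ, rfl, hψ, hψAB⟩ := hS.1
  obtain ⟨φ, hφ, hφψ⟩ := MVD.exists_full_refines hψ
  have hφAB := hψAB.of_refines hφ.1.1 hψ.1 hφψ
  exact ⟨φ, ⟨hφ, A, B, hφψ.1 ▸ hS, hφAB⟩, hφψ.1 ▸ hSW, hφAB⟩

def MepsBounded (H : Finset α → ℝ) (ε : ℝ) (n : ℕ) (v : ℝ) : Prop :=
  ∃ φ : Fin n → MVD α, (∀ i, φ i ∈ Meps H ε) ∧ v ≤ ∑ i, (φ i).J H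

namespace MepsBounded

variable {H : Finset α → ℝ} {ε : ℝ}

theorem zero : MepsBounded H ε 0 0 :=
  ⟨Fin.elim0, fun i => i.elim0, by simp⟩

theorem add {m n : ℕ} {v w : ℝ} (hv : MepsBounded H ε m v) (hw : MepsBounded H ε n w) :
    MepsBounded H ε (m + n) (v + w) := by
  obtain ⟨φ, hφ, hφv⟩ := hv
  obtain ⟨ψ, hψ, hψw⟩ := hw
  refine ⟨Fin.append φ ψ, Fin.addCases (by simpa using hφ) (by simpa using hψ), ?_⟩
  rw [Fin.sum_univ_add]
  simp only [Fin.append_left, Fin.append_right]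
  linarith

theorem of_sepSet (hH : Submodular H) {W : Finset α} {A B : α} (hW : sepSet H ε W A B) :
    MepsBounded H ε 1 (condMutualInfo H W {A} {B}) := by
  obtain ⟨φ, hφ, hφW, hφAB⟩ := exists_mem_Meps_key_subset hW
  exact ⟨fun _ => φ, fun _ => hφ, by
    simpa using MVD.condMutualInfo_le_J_of_separatesPair hH hφ.1.1.1 hφW hφAB⟩

/-- Induction along the chain rule, moving one attribute of `Y` at a time into the key. -/
theorem of_chain {P : Finset α → Finset α → Prop} {f : Finset α → Finset α → ℝ} {k : ℕ}
    (hempty : ∀ X, f X ∅ = 0)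
    (hchain : ∀ X Y A, f X (insert A Y) = f X {A} + f (insert A X) Y)
    (hsplit : ∀ X Y A, A ∉ Y → P X (insert A Y) → P X {A} ∧ P (insert A X) Y)
    (hbase : ∀ X A, P X {A} → MepsBounded H ε k (f X {A})) :
    ∀ Y X, P X Y → MepsBounded H ε (#Y * k) (f X Y) := by
  intro Y
  induction Y using Finset.induction_on with
  | empty => simpa [hempty] using fun _ _ => zero
  | @insert A Y hA ih =>
    intro X hXY
    obtain ⟨hA₁, hY₁⟩ := hsplit X Y A hA hXY
    rw [hchain, card_insert_of_notMem hA, Nat.succ_mul, add_comm]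
    exact (hbase X A hA₁).add (ih _ hY₁)

end MepsBounded

/-- Weaker than `X ⟶⟶ Y | Z` being an `ε`-MVD, so that it survives moving attributes of `Y` or
`Z` into the key. -/
def EpsSplits (H : Finset α → ℝ) (ε : ℝ) (X Y Z : Finset α) : Prop :=
  ∃ Y' Z', Y ⊆ Y' ∧ Z ⊆ Z' ∧ Disjoint X Y' ∧ Disjoint X Z' ∧ Disjoint Y' Z' ∧
    X ∪ Y' ∪ Z' = univ ∧ condMutualInfo H X Y' Z' ≤ ε

namespace EpsSplits

variable {H : Finset α → ℝ} {ε : ℝ} {X Y Z : Finset α}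

theorem symm (h : EpsSplits H ε X Y Z) : EpsSplits H ε X Z Y := by
  obtain ⟨Y', Z', hY, hZ, hXY, hXZ, hYZ, hcov, hε⟩ := h
  exact ⟨Z', Y', hZ, hY, hXZ, hXY, hYZ.symm, by rwa [union_right_comm],
    by rwa [condMutualInfo_comm]⟩

theorem mono_left {Y₀ : Finset α} (h : EpsSplits H ε X Y Z) (hY₀ : Y₀ ⊆ Y) :
    EpsSplits H ε X Y₀ Z := by
  obtain ⟨Y', Z', hY, h'⟩ := h
  exact ⟨Y', Z', hY₀.trans hY, h'⟩

theorem insert_key (hH : Submodular H) {A : α} (hA : A ∉ Y)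
    (h : EpsSplits H ε X (insert A Y) Z) : EpsSplits H ε (insert A X) Y Z := by
  obtain ⟨Y', Z', hY, hZ, hXY, hXZ, hYZ, hcov, hε⟩ := h
  have hAY' : A ∈ Y' := hY (mem_insert_self A Y)
  have hAZ' : A ∉ Z' := disjoint_left.mp hYZ hAY'
  refine ⟨Y'.erase A, Z', ?_, hZ, ?_, ?_, hYZ.mono_left (erase_subset A Y'), ?_, ?_⟩
  · exact fun x hx => mem_erase.mpr ⟨ne_of_mem_of_not_mem hx hA, hY (mem_insert_of_mem hx)⟩
  · exact disjoint_insert_left.mpr ⟨notMem_erase A Y', hXY.mono_right (erase_subset A Y')⟩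
  · exact disjoint_insert_left.mpr ⟨hAZ', hXZ⟩
  · rwa [insert_union, ← union_insert, insert_erase hAY']
  · have h := condMutualInfo_insert_left H X (Y'.erase A) Z' A
    rw [insert_erase hAY'] at h
    linarith [condMutualInfo_nonneg hH X (disjoint_singleton_left.mpr hAZ')]

theorem sepSet {A B : α} (h : EpsSplits H ε X {A} {B}) : sepSet H ε X A B := by
  obtain ⟨Y', Z', hA, hB, hXY, hXZ, hYZ, hcov, hε⟩ := h
  rw [singleton_subset_iff] at hA hB
  have hne : Y' ≠ Z' := fun h => disjoint_left.mp hYZ hA (h ▸ hA)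
  refine ⟨⟨X, {Y', Z'}⟩, rfl, ⟨⟨(card_pair hne).ge, ?_, ?_, ?_⟩, ?_⟩,
    Y', mem_insert_self _ _, Z', mem_insert_of_mem (mem_singleton_self _), hne, hA, hB⟩
  · simp only [mem_insert, mem_singleton, forall_eq_or_imp, forall_eq]
    exact ⟨⟨⟨A, hA⟩, hXY.symm⟩, ⟨B, hB⟩, hXZ.symm⟩
  · simp only [mem_insert, mem_singleton, forall_eq_or_imp, forall_eq, ne_eq, not_true_eq_false,
      IsEmpty.forall_iff, true_and, and_true]
    exact ⟨fun _ => hYZ, fun _ => hYZ.symm⟩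
  · simpa [← union_assoc] using hcov
  · rw [MVD.J, sum_pair hne, card_pair hne, ← hcov]
    rw [condMutualInfo] at hε
    push_cast
    linarith

end EpsSplits

namespace MepsBounded

variable {H : Finset α → ℝ} {ε : ℝ}

theorem of_epsSplits_singleton_left (hH : Submodular H) (A : α) :
    ∀ Z X, EpsSplits H ε X {A} Z → MepsBounded H ε #Z (condMutualInfo H X {A} Z) := by
  simpa using of_chain (P := fun X Z => EpsSplits H ε X {A} Z) (k := 1)
    (f := fun X Z => condMutualInfo H X {A} Z)
    (fun _ => by rw [condMutualInfo_comm, condMutualInfo_empty_left])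
    (fun X Z B => by
      rw [condMutualInfo_comm, condMutualInfo_insert_left, condMutualInfo_comm H X {B},
        condMutualInfo_comm H (insert B X) Z])
    (fun X Z B hB h => ⟨(h.symm.mono_left (singleton_subset_iff.mpr (mem_insert_self B Z))).symm,
      (h.symm.insert_key hH hB).symm⟩)
    (fun X B h => of_sepSet hH h.sepSet)

theorem of_epsSplits (hH : Submodular H) (Z : Finset α) :
    ∀ Y X, EpsSplits H ε X Y Z → MepsBounded H ε (#Y * #Z) (condMutualInfo H X Y Z) :=
  of_chain (P := fun X Y => EpsSplits H ε X Y Z)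
    (fun X => condMutualInfo_empty_left H X Z)
    (fun X Y A => condMutualInfo_insert_left H X Y Z A)
    (fun _ Y A hA h => ⟨h.mono_left (singleton_subset_iff.mpr (mem_insert_self A Y)),
      h.insert_key hH hA⟩)
    (fun X A h => of_epsSplits_singleton_left hH A Z X h)

end MepsBounded

theorem fullMVDs_completeness_general
    (H : Finset α → ℝ)
    (hsub : ∀ A B : Finset α, H (A ∪ B) + H (A ∩ B) ≤ H A + H B)
    (ε : ℝ)
    (X Y Z : Finset α)
    (hYZ : Disjoint Y Z) (hXY : Disjoint X Y) (hXZ : Disjoint X Z)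
    (hcover : X ∪ Y ∪ Z = Finset.univ)
    (hMVD : H (X ∪ Y) + H (X ∪ Z) - H (X ∪ Y ∪ Z) - H X ≤ ε) :
    ∃ φ : Fin (Y.card * Z.card) → MVD α,
      (∀ i, φ i ∈ Meps H ε) ∧
        H (X ∪ Y) + H (X ∪ Z) - H (X ∪ Y ∪ Z) - H X ≤ ∑ i, (φ i).J H := by
  have hsplit : EpsSplits H ε X Y Z :=
    ⟨Y, Z, subset_rfl, subset_rfl, hXY, hXZ, hYZ, hcover, by rw [condMutualInfo]; linarith⟩
  obtain ⟨φ, hφ, hle⟩ := MepsBounded.of_epsSplits hsub Z Y X hsplit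
  exact ⟨φ, hφ, by rw [condMutualInfo] at hle; linarith⟩

/-- Completeness of minimal-separator full MVDs: if `X ⟶⟶ Y|Z`
is an `ε`-MVD for `R` (i.e. `I(Y;Z|X) ≤ ε`, where `H` is the empirical entropy of `R`,
a polymatroid), then there exist `m = |Y|·|Z|` MVDs `φ₁,…,φ_m ∈ M_ε` such that
`I(Y;Z|X) ≤ Σᵢ J(φᵢ)`. -/
theorem fullMVDs_completeness
    (H : Finset α → ℝ)
    (h0 : H ∅ = 0)
    (hmono : ∀ A B : Finset α, A ⊆ B → H A ≤ H B)
    (hsub : ∀ A B : Finset α, H (A ∪ B) + H (A ∩ B) ≤ H A + H B)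
    (ε : ℝ) (hε : 0 ≤ ε)
    (X Y Z : Finset α)
    (hY : Y.Nonempty) (hZ : Z.Nonempty)
    (hYZ : Disjoint Y Z) (hXY : Disjoint X Y) (hXZ : Disjoint X Z)
    (hcover : X ∪ Y ∪ Z = Finset.univ)
    (hMVD : H (X ∪ Y) + H (X ∪ Z) - H (X ∪ Y ∪ Z) - H X ≤ ε) :
    ∃ φ : Fin (Y.card * Z.card) → MVD α,
      (∀ i, φ i ∈ Meps H ε) ∧
        H (X ∪ Y) + H (X ∪ Z) - H (X ∪ Y ∪ Z) - H X ≤ ∑ i, (φ i).J H :=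
  fullMVDs_completeness_general H hsub ε X Y Z hYZ hXY hXZ hcover hMVD
end

section
/- Transversal characterization of new minimal separators: let C = {C₁,…,C_n} be a collection of minimal A,B-separators in R. There exists a minimal A,B-separator X ∉ C if and only if there exists a minimal transversal D of C such that the complement Ω∖D is an A,B-separator. -/
open Finset

/-- Any finset satisfying `P` contains a subset minimal with respect to `P`. -/
lemma exists_minimal_subset {α : Type*} [DecidableEq α] (P : Finset α → Prop) :
    ∀ S : Finset α, P S → ∃ T ⊆ S, P T ∧ ∀ T' ⊂ T, ¬ P T' := by
  intro S
  induction S using Finset.strongInduction with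
  | _ S ih =>
    intro hS
    by_cases h : ∃ T' ⊂ S, P T'
    · obtain ⟨T', hT'S, hPT'⟩ := h
      obtain ⟨T, hTsub, hPT, hmin⟩ := ih T' hT'S hPT'
      exact ⟨T, hTsub.trans hT'S.subset, hPT, hmin⟩
    · push_neg at h
      exact ⟨S, Finset.Subset.refl S, hS, h⟩

/-- Transversal characterization of new minimal separators.
`sep` is an abstract, upward-closed separation predicate on subsets of the attribute
set `Ω = α` (with the pair `A,B` abstracted away), and `C` is a collection of minimal
separators. There exists a minimal separator `X ∉ C` iff there exists a minimal
transversal `D` of `C` whose complement `Ω∖D` is a separator. -/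
theorem minimal_separator_transversal {α : Type*} [Fintype α] [DecidableEq α]
    (sep : Finset α → Prop)
    (hup : ∀ S T : Finset α, sep S → S ⊆ T → sep T)
    (C : Finset (Finset α))
    (hC : ∀ c ∈ C, sep c ∧ ∀ c' ⊂ c, ¬ sep c') :
    (∃ X : Finset α, (sep X ∧ ∀ X' ⊂ X, ¬ sep X') ∧ X ∉ C) ↔
      (∃ D : Finset α, (∀ c ∈ C, (D ∩ c).Nonempty) ∧
        (∀ D' ⊂ D, ¬ ∀ c ∈ C, (D' ∩ c).Nonempty) ∧
        sep (Finset.univ \ D)) := by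
  constructor
  · rintro ⟨X, ⟨hX, hXmin⟩, hXC⟩
    -- `univ \ X` is a transversal of `C`
    have htrans : ∀ c ∈ C, ((Finset.univ \ X) ∩ c).Nonempty := by
      intro c hc
      by_contra hempty
      rw [Finset.not_nonempty_iff_eq_empty] at hempty
      have hsub : c ⊆ X := by
        intro x hx
        by_contra hxX
        have : x ∈ (Finset.univ \ X) ∩ c :=
          Finset.mem_inter.mpr ⟨Finset.mem_sdiff.mpr ⟨Finset.mem_univ x, hxX⟩, hx⟩
        simp [hempty] at this
      rcases hsub.eq_or_ssubset with heq | hss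
      · exact hXC (heq ▸ hc)
      · exact hXmin c hss (hC c hc).1
    obtain ⟨D, hDsub, hDtrans, hDmin⟩ :=
      exists_minimal_subset (fun D => ∀ c ∈ C, (D ∩ c).Nonempty) (Finset.univ \ X) htrans
    refine ⟨D, hDtrans, hDmin, ?_⟩
    apply hup X
    · exact hX
    · intro x hx
      refine Finset.mem_sdiff.mpr ⟨Finset.mem_univ x, fun hxD => ?_⟩
      have := hDsub hxD
      simp [Finset.mem_sdiff, hx] at this
  · rintro ⟨D, hDtrans, _, hsep⟩
    obtain ⟨X, hXsub, hXsep, hXmin⟩ := exists_minimal_subset sep (Finset.univ \ D) hsep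
    refine ⟨X, ⟨hXsep, hXmin⟩, fun hXC => ?_⟩
    obtain ⟨x, hx⟩ := hDtrans X hXC
    rw [Finset.mem_inter] at hx
    have := hXsub hx.2
    simp [Finset.mem_sdiff, hx.1] at this
end
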